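/- arXiv:2002.04282 — 7 statements merged into one kernel-verified Lean document; each statement's English description precedes it below -/
import Mathlib

section
/- For every set X ⊆ ℝ^n and every point x ∈ ℝ^n, the set Str_X(x) of X-strata at x is an ℝ-linear subspace of ℝ^n (it contains 0 and is closed under addition and scalar multiplication). -/
open FirstOrder

/-- The language of `⟨ℝ,+,<,1⟩`: one constant, one binary function, one binary relation. -/
def SsLang : Language where
  Functions := fun m => match m with
    | 0 => Unit
    | 2 => Unit
    | _ => Empty
  Relations := fun m => match m with
    | 2 => Unit
    | _ => Empty

noncomputable instance ssStructure : SsLang.Structure ℝ where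
  funMap := fun {m} f x =>
    match m, f with
    | 0, _ => (1 : ℝ)
    | 2, _ => x 0 + x 1
  RelMap := fun {m} r x =>
    match m, r with
    | 2, _ => x 0 < x 1

/-- The language of `⟨ℝ,+,<,ℤ⟩`: one binary function, one unary relation, one binary relation. -/
def LsLang : Language where
  Functions := fun m => match m with
    | 2 => Unit
    | _ => Empty
  Relations := fun m => match m with
    | 1 => Unit
    | 2 => Unit
    | _ => Empty

noncomputable instance lsStructure : LsLang.Structure ℝ where
  funMap := fun {m} f x =>
    match m, f with
    | 2, _ => x 0 + x 1
  RelMap := fun {m} r x =>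
    match m, r with
    | 1, _ => ∃ k : ℤ, x 0 = (k : ℝ)
    | 2, _ => x 0 < x 1

/-- `X ⊆ ℝ^n` is definable without parameters in `⟨ℝ,+,<,1⟩`. -/
def SsDefinable {n : ℕ} (X : Set (Fin n → ℝ)) : Prop :=
  Set.Definable (∅ : Set ℝ) SsLang X

/-- `X ⊆ ℝ^n` is definable without parameters in `⟨ℝ,+,<,ℤ⟩`. -/
def LsDefinable {n : ℕ} (X : Set (Fin n → ℝ)) : Prop :=
  Set.Definable (∅ : Set ℝ) LsLang X

def SsDefinable1 (A : Set ℝ) : Prop := SsDefinable {f : Fin 1 → ℝ | f 0 ∈ A}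
def LsDefinable1 (A : Set ℝ) : Prop := LsDefinable {f : Fin 1 → ℝ | f 0 ∈ A}

/-- `v` is an `X`-stratum at `x`: for some `r > 0`,
`B(x,r) ∩ L_v(X ∩ B(x,r)) ⊆ X`.  (The sup norm/metric is the default one on `ι → ℝ`.) -/
def IsStratum {ι : Type} [Fintype ι] (X : Set (ι → ℝ)) (x v : ι → ℝ) : Prop :=
  ∃ r > (0 : ℝ), ∀ y ∈ Metric.ball x r,
    (∃ z ∈ X ∩ Metric.ball x r, ∃ α : ℝ, y = z + α • v) → y ∈ X

/-- `x` is `X`-singular: `Str_X(x) = {0}`. -/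
def IsSingular {ι : Type} [Fintype ι] (X : Set (ι → ℝ)) (x : ι → ℝ) : Prop :=
  ∀ v, IsStratum X x v → v = 0

/-- `x ∼_X y`: some translation of a small ball around `x` identifies `X` near `x` and near `y`. -/
def SimX {n : ℕ} (X : Set (Fin n → ℝ)) (x y : Fin n → ℝ) : Prop :=
  ∃ r > (0 : ℝ), ∀ w : Fin n → ℝ, ‖w‖ < r → (x + w ∈ X ↔ y + w ∈ X)

/-- the dimension of the subspace `Str_X(x)` of strata at `x`. -/
noncomputable def strDim {n : ℕ} (X : Set (Fin n → ℝ)) (x : Fin n → ℝ) : ℕ :=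
  Module.finrank ℝ (Submodule.span ℝ {v | IsStratum X x v})

/-- An interval of `ℝ` all of whose finite endpoints are rational: an order-convex set
whose frontier points (i.e. finite endpoints) are all rational. -/
def IsRatInterval (I : Set ℝ) : Prop :=
  I.OrdConnected ∧ ∀ x ∈ frontier I, ∃ q : ℚ, x = (q : ℝ)

/-!
Near `x`, being a stratum means that `X` is saturated by the lines in direction `v` inside a
small ball, which is stable under scaling `v`. For `v + w`, a segment from
`z ∈ X` in direction `v + w` inside the half ball is split into `N` short steps, each replaced
by a staircase: a step along `v` followed by a step along `w`. Convexity of the ball keeps the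
corners of the staircase in the full ball, so each step stays in `X`.
-/

open Metric Filter

/-- `U ∩ L_v(X ∩ U) ⊆ X`. -/
def IsLineClosedOn {E : Type*} [AddCommGroup E] [Module ℝ E] (X U : Set E) (v : E) : Prop :=
  ∀ z ∈ X ∩ U, ∀ α : ℝ, z + α • v ∈ U → z + α • v ∈ X

section Module

variable {E : Type*} [AddCommGroup E] [Module ℝ E] {X U V : Set E} {v : E}

theorem IsLineClosedOn.mono (h : IsLineClosedOn X U v) (hVU : V ⊆ U) : IsLineClosedOn X V v :=
  fun z hz α hzα => h z ⟨hz.1, hVU hz.2⟩ α (hVU hzα)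

theorem isLineClosedOn_zero (X U : Set E) : IsLineClosedOn X U 0 := by
  rintro z ⟨hzX, -⟩ α -
  simpa using hzX

theorem IsLineClosedOn.smul (h : IsLineClosedOn X U v) (c : ℝ) : IsLineClosedOn X U (c • v) := by
  intro z hz α hzα
  rw [smul_smul] at hzα ⊢
  exact h z hz _ hzα

end Module

theorem add_mem_ball_of_norm_lt {E : Type*} [SeminormedAddCommGroup E] {x a u : E} {s t : ℝ}
    (ha : a ∈ ball x s) (hu : ‖u‖ < t) : a + u ∈ ball x (s + t) := by
  rw [mem_ball, dist_eq_norm, add_sub_right_comm]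
  exact (norm_add_le _ _).trans_lt (add_lt_add (mem_ball_iff_norm.1 ha) hu)

section Normed

variable {E : Type*} [SeminormedAddCommGroup E] [NormedSpace ℝ E] {X : Set E} {x v w : E}
  {r : ℝ}

theorem IsLineClosedOn.add_ball_half (hv : IsLineClosedOn X (ball x r) v)
    (hw : IsLineClosedOn X (ball x r) w) : IsLineClosedOn X (ball x (r / 2)) (v + w) := by
  rintro z ⟨hzX, hz⟩ α hy
  have hr : 0 < r / 2 := pos_of_mem_ball hz
  have hsmall : ∀ u : E, ∀ᶠ N : ℕ in atTop, ‖(α / N) • u‖ < r / 2 := fun u => by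
    have h := ((tendsto_const_div_atTop_nhds_zero_nat α).smul_const u).norm
    rw [zero_smul, norm_zero] at h
    exact h.eventually (gt_mem_nhds hr)
  obtain ⟨N, hN, hNv, hNw⟩ :=
    ((eventually_gt_atTop 0).and ((hsmall v).and (hsmall w))).exists
  have hN' : (N : ℝ) ≠ 0 := by positivity
  set p : ℕ → E := fun k => z + ((k : ℝ) / N) • (α • (v + w))
  have hp_ball : ∀ k ≤ N, p k ∈ ball x (r / 2) := fun k hk =>
    (convex_ball x (r / 2)).add_smul_mem hz hy
      ⟨by positivity, div_le_one_of_le₀ (by exact_mod_cast hk) N.cast_nonneg⟩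
  have hp_step : ∀ k, p (k + 1) = (p k + (α / N) • v) + (α / N) • w := fun k => by
    simp only [p]
    push_cast
    module
  have hp_mem : ∀ k ≤ N, p k ∈ X := by
    intro k
    induction k with
    | zero => intro _; simpa [p] using hzX
    | succ k ih =>
      intro hk
      have hpk := hp_ball k (by omega)
      have hcorner_ball : p k + (α / N) • v ∈ ball x r := by
        simpa only [add_halves] using add_mem_ball_of_norm_lt hpk hNv
      have hcorner : p k + (α / N) • v ∈ X :=
        hv _ ⟨ih (by omega), ball_subset_ball (by linarith) hpk⟩ _ hcorner_ball
      have hnext := hp_ball (k + 1) hk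
      rw [hp_step] at hnext ⊢
      exact hw _ ⟨hcorner, hcorner_ball⟩ _ (ball_subset_ball (by linarith) hnext)
  have hp_end : p N = z + α • (v + w) := by
    simp only [p, div_self hN', one_smul]
  exact hp_end ▸ hp_mem N le_rfl

end Normed

theorem isStratum_iff {ι : Type} [Fintype ι] {X : Set (ι → ℝ)} {x v : ι → ℝ} :
    IsStratum X x v ↔ ∃ r > 0, IsLineClosedOn X (ball x r) v := by
  refine exists_congr fun r => and_congr_right fun _ => ⟨?_, ?_⟩
  · exact fun h z hz α hzα => h _ hzα ⟨z, hz, α, rfl⟩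
  · rintro h y hy ⟨z, hz, α, rfl⟩
    exact h z hz α hy

/-- `Str_X(x)` is an `ℝ`-linear subspace of `ℝ^n`: it contains `0` and is closed under
addition and scalar multiplication. -/
theorem stmt4 (n : ℕ) (X : Set (Fin n → ℝ)) (x : Fin n → ℝ) :
    IsStratum X x 0 ∧
    (∀ v w : Fin n → ℝ, IsStratum X x v → IsStratum X x w → IsStratum X x (v + w)) ∧
    (∀ (c : ℝ) (v : Fin n → ℝ), IsStratum X x v → IsStratum X x (c • v)) := by
  simp only [isStratum_iff]
  refine ⟨⟨1, one_pos, isLineClosedOn_zero _ _⟩, ?_, ?_⟩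
  · rintro v w ⟨r, hr, hv⟩ ⟨s, hs, hw⟩
    exact ⟨min r s / 2, by positivity,
      (hv.mono (ball_subset_ball (min_le_left r s))).add_ball_half
        (hw.mono (ball_subset_ball (min_le_right r s)))⟩
  · rintro c v ⟨r, hr, hv⟩
    exact ⟨r, hr, hv.smul c⟩
end

section
/- For every set X ⊆ ℝ^n and every point x ∈ ℝ^n there exists a real r > 0 such that, for every v ∈ Str_X(x), B(x,r) ∩ L_v(X ∩ B(x,r)) ⊆ X (i.e., a single radius r witnesses the stratum condition simultaneously for all strata at x). -/
open FirstOrder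

/-!
Strata at `x` with a common radius are closed under scalar multiples and, after halving the
radius, under sums: to move from `z` to `z + α • (v + w)` inside `X`, cut the segment into `N`
pieces and cross each piece by a short `v`-step followed by a `w`-step; for `N` large the
intermediate points stay in the bigger ball. Hence every vector in the span of `k` strata of
common radius `r` is a stratum of radius `r / 2 ^ k`, and the span of all strata is spanned by
finitely many of them.
-/

open Metric Topology

section Radius

variable {E : Type*} [NormedAddCommGroup E] [NormedSpace ℝ E]

/-- On `ι → ℝ`, `IsStratum X x v` unfolds to `∃ r > 0, IsStratumOfRadius X x v r`. -/
def IsStratumOfRadius (X : Set E) (x v : E) (r : ℝ) : Prop :=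
  ∀ y ∈ ball x r, (∃ z ∈ X ∩ ball x r, ∃ α : ℝ, y = z + α • v) → y ∈ X

variable {X : Set E} {x v w : E} {r s : ℝ}

theorem IsStratumOfRadius.mono (h : IsStratumOfRadius X x v r) (hsr : s ≤ r) :
    IsStratumOfRadius X x v s := by
  rintro y hy ⟨z, ⟨hzX, hz⟩, α, rfl⟩
  exact h _ (ball_subset_ball hsr hy) ⟨z, ⟨hzX, ball_subset_ball hsr hz⟩, α, rfl⟩

theorem IsStratumOfRadius.smul (h : IsStratumOfRadius X x v r) (c : ℝ) :
    IsStratumOfRadius X x (c • v) r := by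
  rintro y hy ⟨z, hz, α, rfl⟩
  exact h _ hy ⟨z, hz, α * c, by rw [smul_smul]⟩

theorem isStratumOfRadius_zero : IsStratumOfRadius X x 0 r := by
  rintro y - ⟨z, ⟨hzX, -⟩, α, rfl⟩
  simpa using hzX

theorem IsStratumOfRadius.add_smul_add_mem (hv : IsStratumOfRadius X x v r)
    (hw : IsStratumOfRadius X x w r) {p : E} {β : ℝ} (hp : p ∈ X ∩ ball x (r / 2))
    (hq : p + β • (v + w) ∈ ball x (r / 2)) (hβ : ‖β • v‖ ≤ r / 2) :
    p + β • (v + w) ∈ X := by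
  have hball : ball x (r / 2) ⊆ ball x r :=
    ball_subset_ball (by linarith [norm_nonneg (β • v)])
  have hmid : p + β • v ∈ ball x r := by
    rw [mem_ball]
    linarith [dist_triangle (p + β • v) p x, dist_self_add_left (β • v) p, mem_ball.1 hp.2]
  have hmidX : p + β • v ∈ X := hv _ hmid ⟨p, ⟨hp.1, hball hp.2⟩, β, rfl⟩
  exact hw _ (hball hq) ⟨_, ⟨hmidX, hmid⟩, β, by rw [smul_add, add_assoc]⟩

theorem IsStratumOfRadius.add (hv : IsStratumOfRadius X x v r)
    (hw : IsStratumOfRadius X x w r) : IsStratumOfRadius X x (v + w) (r / 2) := by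
  rintro y hy ⟨z, ⟨hzX, hz⟩, α, rfl⟩
  have hr : 0 < r / 2 := pos_of_mem_ball hy
  obtain ⟨N, hN⟩ := exists_nat_gt (‖α • v‖ / (r / 2))
  have hN0 : (0 : ℝ) < N := (div_nonneg (norm_nonneg _) hr.le).trans_lt hN
  have hβ : ‖(α / N) • v‖ ≤ r / 2 := by
    rw [div_eq_inv_mul, ← smul_smul, norm_smul, norm_inv, Real.norm_natCast, inv_mul_le_iff₀ hN0]
    exact ((div_lt_iff₀ hr).1 hN).le
  have hseg : ∀ i ≤ N, z + ((i : ℝ) * (α / N)) • (v + w) ∈ ball x (r / 2) := by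
    intro i hi
    have ht : (i / N : ℝ) ∈ Set.Icc (0 : ℝ) 1 :=
      ⟨by positivity, div_le_one_of_le₀ (by exact_mod_cast hi) hN0.le⟩
    convert (convex_ball x (r / 2)).add_smul_sub_mem hz hy ht using 2
    rw [add_sub_cancel_left, smul_smul]
    ring_nf
  have hchain : ∀ i ≤ N, z + ((i : ℝ) * (α / N)) • (v + w) ∈ X := by
    intro i
    induction i with
    | zero => simpa using hzX
    | succ i ih =>
      intro hi
      have hstep := hv.add_smul_add_mem hw ⟨ih (by omega), hseg i (by omega)⟩
        (by simpa only [Nat.cast_succ, add_mul, one_mul, add_smul, add_assoc]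
          using hseg (i + 1) hi) hβ
      simpa only [Nat.cast_succ, add_mul, one_mul, add_smul, add_assoc] using hstep
  simpa [mul_div_cancel₀ α hN0.ne'] using hchain N le_rfl

theorem IsStratumOfRadius.sum {ι : Type*} (T : Finset ι) {f : ι → E} (hr : 0 ≤ r)
    (h : ∀ i ∈ T, IsStratumOfRadius X x (f i) r) :
    IsStratumOfRadius X x (∑ i ∈ T, f i) (r / 2 ^ T.card) := by
  classical
  induction T using Finset.induction_on with
  | empty => simpa using isStratumOfRadius_zero
  | insert a T ha ih =>
    rw [Finset.sum_insert ha, Finset.card_insert_of_notMem ha, pow_succ, ← div_div]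
    have hfa := (h a (Finset.mem_insert_self a T)).mono
      (div_le_self hr (one_le_pow₀ one_le_two : (1 : ℝ) ≤ 2 ^ T.card))
    exact hfa.add (ih fun i hi => h i (Finset.mem_insert_of_mem hi))

theorem exists_isStratumOfRadius_forall_mem (T : Finset E)
    (hT : ∀ v ∈ T, ∃ r > 0, IsStratumOfRadius X x v r) :
    ∃ r > 0, ∀ v ∈ T, IsStratumOfRadius X x v r := by
  have hev : ∀ v ∈ T, ∀ᶠ s in 𝓝[>] (0 : ℝ), IsStratumOfRadius X x v s := by
    intro v hv
    obtain ⟨r, hr, hvr⟩ := hT v hv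
    filter_upwards [Ioo_mem_nhdsGT hr] with s hs using hvr.mono hs.2.le
  obtain ⟨r, hrT, hr⟩ := (((Filter.eventually_all_finset T).2 hev).and self_mem_nhdsWithin).exists
  exact ⟨r, hr, hrT⟩

theorem exists_isStratumOfRadius_forall_mem_span (T : Finset E)
    (hT : ∀ v ∈ T, ∃ r > 0, IsStratumOfRadius X x v r) :
    ∃ r > 0, ∀ v ∈ Submodule.span ℝ (T : Set E), IsStratumOfRadius X x v r := by
  obtain ⟨r, hr, hrT⟩ := exists_isStratumOfRadius_forall_mem T hT
  refine ⟨r / 2 ^ T.card, by positivity, fun v hv => ?_⟩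
  obtain ⟨c, -, rfl⟩ := Submodule.mem_span_finset.1 hv
  exact IsStratumOfRadius.sum T hr.le fun u hu => (hrT u hu).smul (c u)

end Radius

/-- A single radius witnesses the stratum condition simultaneously for all strata at `x`. -/
theorem stmt5 (n : ℕ) (X : Set (Fin n → ℝ)) (x : Fin n → ℝ) :
    ∃ r > (0 : ℝ), ∀ v : Fin n → ℝ, IsStratum X x v →
      ∀ y ∈ Metric.ball x r,
        (∃ z ∈ X ∩ Metric.ball x r, ∃ α : ℝ, y = z + α • v) → y ∈ X := by
  obtain ⟨T, hTstrata, -, hspan, -⟩ :=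
    Submodule.exists_finset_span_eq_linearIndepOn ℝ {v | IsStratum X x v}
  obtain ⟨r, hr, hrT⟩ := exists_isStratumOfRadius_forall_mem_span T fun v hv => hTstrata hv
  exact ⟨r, hr, fun v hv => hrT v (hspan ▸ Submodule.subset_span hv)⟩
end

section
/- Let X ⊆ ℝ^n, let x ∈ ℝ^n, and let r > 0 be a safe radius for x with respect to X. Then for every y ∈ B(x,r) one has Str_X(x) ⊆ Str_X(y). -/
open FirstOrder

theorem IsStratum.of_ball_subset {ι : Type} [Fintype ι] {X : Set (ι → ℝ)} {x y v : ι → ℝ}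
    {r s : ℝ} (hs : 0 < s) (hball : Metric.ball y s ⊆ Metric.ball x r)
    (hX : ∀ w ∈ Metric.ball x r, (∃ z ∈ X ∩ Metric.ball x r, ∃ α : ℝ, w = z + α • v) → w ∈ X) :
    IsStratum X y v :=
  ⟨s, hs, fun w hw ⟨z, ⟨hzX, hz⟩, α, hwz⟩ => hX w (hball hw) ⟨z, ⟨hzX, hball hz⟩, α, hwz⟩⟩

theorem stmt7_general (n : ℕ) (X : Set (Fin n → ℝ)) (x : Fin n → ℝ) (r : ℝ)
    (hsafe : ∀ v : Fin n → ℝ, IsStratum X x v →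
      ∀ y ∈ Metric.ball x r,
        (∃ z ∈ X ∩ Metric.ball x r, ∃ α : ℝ, y = z + α • v) → y ∈ X)
    (y : Fin n → ℝ) (hy : y ∈ Metric.ball x r) :
    ∀ v : Fin n → ℝ, IsStratum X x v → IsStratum X y v := fun v hv =>
  IsStratum.of_ball_subset (sub_pos.2 hy) (Metric.ball_subset_ball' (sub_add_cancel r _).le)
    (hsafe v hv)

/-- If `r` is a safe radius for `x` then `Str_X(x) ⊆ Str_X(y)` for every `y ∈ B(x,r)`. -/
theorem stmt7 (n : ℕ) (X : Set (Fin n → ℝ)) (x : Fin n → ℝ) (r : ℝ) (hr : 0 < r)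
    (hsafe : ∀ v : Fin n → ℝ, IsStratum X x v →
      ∀ y ∈ Metric.ball x r,
        (∃ z ∈ X ∩ Metric.ball x r, ∃ α : ℝ, y = z + α • v) → y ∈ X)
    (y : Fin n → ℝ) (hy : y ∈ Metric.ball x r) :
    ∀ v : Fin n → ℝ, IsStratum X x v → IsStratum X y v :=
  stmt7_general n X x r hsafe y hy
end

section
/- Let X ⊆ ℝ^n be ⟨ℝ,+,<,ℤ⟩-definable. Then: (1) the equivalence relation ∼_X on ℝ^n has only finitely many equivalence classes; and (2) the family of subspaces {Str_X(x) : x ∈ ℝ^n} is finite. -/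
open FirstOrder

/-!
Quantifier elimination for `⟨ℝ,+,<,ℤ⟩`, done by Fourier–Motzkin elimination on fractional
parts while the integer parts stay arbitrary, puts every definable set in the form
`⋃ᵢ {x | ⌊x⌋ ∈ Zᵢ, {x} ∈ Dᵢ}` with `Zᵢ ⊆ ℤⁿ` and `Dᵢ` semilinear. For small `w`, `⌊x + w⌋` is
`⌊x⌋ - 1_S` and `{x + w}` is `{x} + 1_S + w`, where `S` is the set of integer coordinates of `x`
at which `w` is negative. So the germ of such a set at `x` is determined by finitely many data:
the integer coordinates of `x` and, for each `S`, whether `⌊x⌋ - 1_S ∈ Zᵢ` and the signs of the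
affine forms defining `Dᵢ` at `{x} + 1_S`. Finiteness of germ types survives Boolean operations,
and the strata at a point only depend on the germ there.
-/

open Matrix Filter Topology

/-! ### Affine inequalities and Fourier–Motzkin elimination -/

structure AffineIneq (n : ℕ) where
  a : Fin n → ℝ
  b : ℝ
  strict : Bool

namespace AffineIneq

variable {n : ℕ}

def eval (c : AffineIneq n) (u : Fin n → ℝ) : ℝ := c.a ⬝ᵥ u + c.b

def Holds (c : AffineIneq n) (u : Fin n → ℝ) : Prop :=
  if c.strict then c.eval u < 0 else c.eval u ≤ 0

lemma holds_of_eval_neg {c : AffineIneq n} {u : Fin n → ℝ} (h : c.eval u < 0) : c.Holds u := by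
  unfold Holds; split_ifs <;> linarith

lemma not_holds_of_eval_pos {c : AffineIneq n} {u : Fin n → ℝ} (h : 0 < c.eval u) :
    ¬ c.Holds u := by
  unfold Holds; split_ifs <;> linarith

lemma Holds.mono {c : AffineIneq n} {u v : Fin n → ℝ} (hv : c.Holds v)
    (h : c.eval u ≤ c.eval v) : c.Holds u := by
  unfold Holds at hv ⊢; split_ifs at hv ⊢ <;> linarith

lemma Holds.of_eval_eq_mul {m : ℕ} {c : AffineIneq m} {d : AffineIneq n} {u : Fin m → ℝ}
    {v : Fin n → ℝ} {k : ℝ} (hd : d.Holds v) (hk : 0 < k) (he : c.eval u = k * d.eval v)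
    (hs : c.strict → d.strict) : c.Holds u := by
  unfold Holds at hd ⊢
  rw [he]
  cases hc : c.strict
  · have : d.eval v ≤ 0 := by split_ifs at hd <;> linarith
    simpa using mul_nonpos_of_nonneg_of_nonpos hk.le this
  · rw [if_pos (hs hc)] at hd
    simpa using mul_neg_of_pos_of_neg hk hd

lemma eval_add (c : AffineIneq n) (u w : Fin n → ℝ) : c.eval (u + w) = c.eval u + c.a ⬝ᵥ w := by
  rw [eval, eval, dotProduct_add, add_right_comm]

def neg (c : AffineIneq n) : AffineIneq n := ⟨-c.a, -c.b, !c.strict⟩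

lemma holds_neg (c : AffineIneq n) (u : Fin n → ℝ) : c.neg.Holds u ↔ ¬ c.Holds u := by
  have he : c.neg.eval u = -c.eval u := by
    simp only [eval, neg, neg_dotProduct, neg_add_rev]; ring
  have hs : c.neg.strict = !c.strict := rfl
  unfold Holds
  rw [he, hs]
  cases c.strict <;> simp

def restrict (c : AffineIneq (n + 1)) : AffineIneq n := ⟨Fin.init c.a, c.b, c.strict⟩

def slope (c : AffineIneq (n + 1)) : ℝ := c.a (Fin.last n)

lemma eval_snoc (c : AffineIneq (n + 1)) (x : Fin n → ℝ) (y : ℝ) :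
    c.eval (Fin.snoc x y) = c.restrict.eval x + c.slope * y := by
  simp only [eval, dotProduct, Fin.sum_univ_castSucc, Fin.snoc_castSucc, Fin.snoc_last, restrict,
    Fin.init, slope]
  ring

lemma holds_snoc_of_slope_eq_zero {c : AffineIneq (n + 1)} (h : c.slope = 0) (x : Fin n → ℝ)
    (y : ℝ) : c.Holds (Fin.snoc x y) ↔ c.restrict.Holds x := by
  unfold Holds; rw [eval_snoc, h, zero_mul, add_zero]; rfl

/-- The positive combination of a lower and an upper bound on the last variable in which
that variable cancels. -/
def combine (l u : AffineIneq (n + 1)) : AffineIneq n :=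
  ⟨u.slope • l.restrict.a - l.slope • u.restrict.a, u.slope * l.b - l.slope * u.b,
    l.strict || u.strict⟩

lemma eval_combine (l u : AffineIneq (n + 1)) (x : Fin n → ℝ) (y : ℝ) :
    (combine l u).eval x =
      u.slope * l.eval (Fin.snoc x y) - l.slope * u.eval (Fin.snoc x y) := by
  rw [eval_snoc, eval_snoc]
  simp only [eval, combine, restrict, sub_dotProduct, smul_dotProduct, smul_eq_mul]
  ring

lemma holds_combine_iff {l u : AffineIneq (n + 1)} (hl : l.slope < 0) (hu : 0 < u.slope)
    (x : Fin n → ℝ) :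
    (combine l u).Holds x ↔ ∃ y, l.Holds (Fin.snoc x y) ∧ u.Holds (Fin.snoc x y) := by
  have hs : (combine l u).strict = (l.strict || u.strict) := rfl
  constructor
  · intro h
    -- at the midpoint of the two bounds on `y`, both values are positive multiples of `combine`
    have hl' : l.slope ≠ 0 := hl.ne
    have hu' : u.slope ≠ 0 := hu.ne'
    let y := -(l.restrict.eval x / l.slope + u.restrict.eval x / u.slope) / 2
    refine ⟨y, h.of_eval_eq_mul (k := (2 * u.slope)⁻¹) (by positivity) ?_ (by simp_all),
      h.of_eval_eq_mul (k := (-2 * l.slope)⁻¹) (inv_pos.2 (by linarith)) ?_ (by simp_all)⟩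
    all_goals rw [eval_combine l u x y, eval_snoc, eval_snoc]; simp only [y]; field_simp; ring
  · rintro ⟨y, hly, huy⟩
    unfold Holds at hly huy ⊢
    rw [eval_combine l u x y, hs]
    cases hls : l.strict <;> cases hus : u.strict <;> simp only [hls, hus, if_true, if_false,
      Bool.or_true, Bool.or_false, Bool.false_eq_true] at hly huy ⊢ <;> nlinarith

lemma eventually_atTop_holds_snoc {c : AffineIneq (n + 1)} {x : Fin n → ℝ} (h : c.slope < 0) :
    ∀ᶠ y in atTop, c.Holds (Fin.snoc x y) := by
  filter_upwards [eventually_gt_atTop (-c.restrict.eval x / c.slope)] with y hy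
  rw [div_lt_iff_of_neg h] at hy
  exact holds_of_eval_neg (by rw [eval_snoc]; linarith)

lemma eventually_atBot_holds_snoc {c : AffineIneq (n + 1)} {x : Fin n → ℝ} (h : 0 < c.slope) :
    ∀ᶠ y in atBot, c.Holds (Fin.snoc x y) := by
  filter_upwards [eventually_lt_atBot (-c.restrict.eval x / c.slope)] with y hy
  rw [lt_div_iff₀ h] at hy
  exact holds_of_eval_neg (by rw [eval_snoc]; linarith)

lemma ordConnected_setOf_holds_snoc (c : AffineIneq (n + 1)) (x : Fin n → ℝ) :
    {y | c.Holds (Fin.snoc x y)}.OrdConnected := by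
  refine ⟨fun y₁ h₁ y₂ h₂ y ⟨hy₁, hy₂⟩ => ?_⟩
  have hle : c.eval (Fin.snoc x y) ≤ max (c.eval (Fin.snoc x y₁)) (c.eval (Fin.snoc x y₂)) := by
    simp only [eval_snoc]
    rcases le_total 0 c.slope with hs | hs
    · exact le_max_of_le_right (by nlinarith)
    · exact le_max_of_le_left (by nlinarith)
  rcases max_choice (c.eval (Fin.snoc x y₁)) (c.eval (Fin.snoc x y₂)) with hm | hm <;>
    rw [hm] at hle
  exacts [Holds.mono h₁ hle, Holds.mono h₂ hle]

end AffineIneq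

lemma helly_theorem_real {ι : Type*} {s : Finset ι} {F : ι → Set ℝ}
    (hF : ∀ i ∈ s, (F i).OrdConnected) (h : ∀ i ∈ s, ∀ j ∈ s, (F i ∩ F j).Nonempty) :
    (⋂ i ∈ s, F i).Nonempty := by
  classical
  refine Convex.helly_theorem' (𝕜 := ℝ) (fun i hi => (hF i hi).convex) fun I hIs hI => ?_
  rw [Module.finrank_self] at hI
  rcases I.eq_empty_or_nonempty with rfl | ⟨i, hi⟩
  · simp
  obtain ⟨j, hj⟩ : ∃ j ∈ I, ∀ k ∈ I, k = i ∨ k = j := by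
    by_contra! hne
    obtain ⟨j, hjI, hji, -⟩ := hne i hi
    obtain ⟨k, hkI, hki, hkj⟩ := hne j hjI
    have := Finset.card_le_card (show ({i, j, k} : Finset ι) ⊆ I by
      simp [Finset.insert_subset_iff, *])
    rw [Finset.card_insert_of_notMem (by simp [Ne.symm hji, Ne.symm hki]),
      Finset.card_pair (Ne.symm hkj)] at this
    omega
  obtain ⟨y, hyi, hyj⟩ := h i (hIs hi) j (hIs hj.1)
  exact ⟨y, Set.mem_iInter₂.2 fun k hk => by rcases hj.2 k hk with rfl | rfl <;> assumption⟩

namespace AffineIneq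

variable {n : ℕ}

def cell (cs : List (AffineIneq n)) : Set (Fin n → ℝ) := {u | ∀ c ∈ cs, c.Holds u}

lemma cell_append (cs ds : List (AffineIneq n)) : cell (cs ++ ds) = cell cs ∩ cell ds := by
  ext u
  simp only [cell, List.mem_append, or_imp, forall_and, Set.mem_inter_iff, Set.mem_ofPred_eq]

lemma compl_cell (cs : List (AffineIneq n)) : (cell cs)ᶜ = ⋃ c ∈ cs, cell [c.neg] := by
  ext u; simp [cell, holds_neg]

noncomputable def fourierMotzkin (cs : List (AffineIneq (n + 1))) : List (AffineIneq n) :=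
  (cs.filter (·.slope = 0)).map restrict ++
    (cs.filter (·.slope < 0)).flatMap fun l => (cs.filter (0 < ·.slope)).map (combine l)

lemma exists_holds_snoc_pair {cs : List (AffineIneq (n + 1))} {x : Fin n → ℝ}
    (hx : x ∈ cell (fourierMotzkin cs)) {c d : AffineIneq (n + 1)} (hc : c ∈ cs) (hd : d ∈ cs) :
    ∃ y, c.Holds (Fin.snoc x y) ∧ d.Holds (Fin.snoc x y) := by
  have hflat : ∀ e ∈ cs, e.slope = 0 → ∀ y, e.Holds (Fin.snoc x y) := fun e he h0 y =>
    (holds_snoc_of_slope_eq_zero h0 x y).2 <| hx _ <| List.mem_append_left _ <|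
      List.mem_map_of_mem <| List.mem_filter.2 ⟨he, by simpa using h0⟩
  have htop : ∀ e ∈ cs, e.slope ≤ 0 → ∀ᶠ y in atTop, e.Holds (Fin.snoc x y) := fun e he h =>
    h.lt_or_eq.elim eventually_atTop_holds_snoc fun h0 => .of_forall (hflat e he h0)
  have hbot : ∀ e ∈ cs, 0 ≤ e.slope → ∀ᶠ y in atBot, e.Holds (Fin.snoc x y) := fun e he h =>
    h.lt_or_eq.elim eventually_atBot_holds_snoc fun h0 => .of_forall (hflat e he h0.symm)
  have hcomb : ∀ l ∈ cs, ∀ u ∈ cs, l.slope < 0 → 0 < u.slope →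
      ∃ y, l.Holds (Fin.snoc x y) ∧ u.Holds (Fin.snoc x y) := fun l hl u hu hl0 hu0 =>
    (holds_combine_iff hl0 hu0 x).1 <| hx _ <| List.mem_append_right _ <| List.mem_flatMap.2
      ⟨l, List.mem_filter.2 ⟨hl, by simpa using hl0⟩,
        List.mem_map_of_mem <| List.mem_filter.2 ⟨hu, by simpa using hu0⟩⟩
  by_cases hneg : c.slope ≤ 0 ∧ d.slope ≤ 0
  · exact ((htop c hc hneg.1).and (htop d hd hneg.2)).exists
  by_cases hpos : 0 ≤ c.slope ∧ 0 ≤ d.slope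
  · exact ((hbot c hc hpos.1).and (hbot d hd hpos.2)).exists
  rcases lt_or_gt_of_ne (show c.slope ≠ 0 by grind) with hc0 | hc0
  · exact hcomb c hc d hd hc0 (by grind)
  · obtain ⟨y, hdy, hcy⟩ := hcomb d hd c hc (by grind) hc0
    exact ⟨y, hcy, hdy⟩

lemma cell_fourierMotzkin (cs : List (AffineIneq (n + 1))) :
    cell (fourierMotzkin cs) = {x | ∃ y, Fin.snoc x y ∈ cell cs} := by
  classical
  ext x
  constructor
  · intro hx
    obtain ⟨y, hy⟩ := helly_theorem_real (s := cs.toFinset)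
      (F := fun c => {y | c.Holds (Fin.snoc x y)})
      (fun c _ => ordConnected_setOf_holds_snoc c x)
      (fun c hc d hd => exists_holds_snoc_pair hx (List.mem_toFinset.1 hc)
        (List.mem_toFinset.1 hd))
    simp only [Set.mem_iInter, List.mem_toFinset] at hy
    exact ⟨y, hy⟩
  · rintro ⟨y, hy⟩ e he
    simp only [fourierMotzkin, List.mem_append, List.mem_map, List.mem_flatMap, List.mem_filter,
      decide_eq_true_eq] at he
    rcases he with ⟨c, ⟨hc, h0⟩, rfl⟩ | ⟨l, ⟨hl, hl0⟩, u, ⟨hu, hu0⟩, rfl⟩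
    · exact (holds_snoc_of_slope_eq_zero h0 x y).1 (hy c hc)
    · exact (holds_combine_iff hl0 hu0 x).2 ⟨y, hy l hl, hy u hu⟩

end AffineIneq

/-! ### Semilinear sets -/

open AffineIneq

def IsSemilinear {n : ℕ} (D : Set (Fin n → ℝ)) : Prop :=
  ∃ P : List (List (AffineIneq n)), D = ⋃ cs ∈ P, cell cs

namespace IsSemilinear
variable {n : ℕ} {D E : Set (Fin n → ℝ)}

lemma setOf_holds (c : AffineIneq n) : IsSemilinear {u | c.Holds u} :=
  ⟨[ [c] ], by ext; simp [AffineIneq.cell]⟩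

lemma univ : IsSemilinear (Set.univ : Set (Fin n → ℝ)) := ⟨[ [] ], by simp [AffineIneq.cell]⟩

lemma inter (hD : IsSemilinear D) (hE : IsSemilinear E) : IsSemilinear (D ∩ E) := by
  obtain ⟨P, rfl⟩ := hD
  obtain ⟨Q, rfl⟩ := hE
  refine ⟨P.flatMap fun p => Q.map (p ++ ·), ?_⟩
  ext u
  simp only [Set.mem_inter_iff, Set.mem_iUnion, List.mem_flatMap, List.mem_map, exists_prop]
  constructor
  · rintro ⟨⟨p, hp, hup⟩, q, hq, huq⟩
    exact ⟨p ++ q, ⟨p, hp, q, hq, rfl⟩, by rw [cell_append]; exact ⟨hup, huq⟩⟩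
  · rintro ⟨_, ⟨p, hp, q, hq, rfl⟩, hu⟩
    rw [cell_append] at hu
    exact ⟨⟨p, hp, hu.1⟩, q, hq, hu.2⟩

lemma compl (hD : IsSemilinear D) : IsSemilinear Dᶜ := by
  obtain ⟨P, rfl⟩ := hD
  induction P with
  | nil => simpa using univ
  | cons p P ih =>
    have hp : IsSemilinear (AffineIneq.cell p)ᶜ :=
      ⟨p.map fun c => [c.neg], by rw [compl_cell]; simp⟩
    simpa [Set.compl_union] using hp.inter ih

lemma setOf_dotProduct_add_lt (a : Fin n → ℝ) (b : ℝ) :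
    IsSemilinear {u | a ⬝ᵥ u + b < 0} :=
  setOf_holds ⟨a, b, true⟩

lemma setOf_dotProduct_eq (a : Fin n → ℝ) (b : ℝ) : IsSemilinear {u | a ⬝ᵥ u = b} := by
  have h := (setOf_holds ⟨a, -b, false⟩).inter (setOf_holds ⟨-a, b, false⟩)
  convert h using 1
  ext u
  simp only [Set.mem_ofPred_eq, Set.mem_inter_iff, AffineIneq.Holds, AffineIneq.eval,
    neg_dotProduct, Bool.false_eq_true, if_false]
  exact ⟨fun h => ⟨by linarith, by linarith⟩, fun h => by linarith [h.1, h.2]⟩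

lemma setOf_last_mem_Ico :
    IsSemilinear {u : Fin (n + 1) → ℝ | u (Fin.last n) ∈ Set.Ico 0 1} := by
  have h := (setOf_holds ⟨-Pi.single (Fin.last n) 1, 0, false⟩).inter
    (setOf_holds ⟨Pi.single (Fin.last n) 1, -1, true⟩)
  convert h using 1
  ext u
  simp [AffineIneq.Holds, AffineIneq.eval, ← sub_eq_add_neg, sub_neg]

lemma exists_snoc {D : Set (Fin (n + 1) → ℝ)} (hD : IsSemilinear D) :
    IsSemilinear {x : Fin n → ℝ | ∃ y, Fin.snoc x y ∈ D} := by
  obtain ⟨P, rfl⟩ := hD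
  refine ⟨P.map fourierMotzkin, ?_⟩
  ext x
  simp only [Set.mem_iUnion, List.mem_map, exists_prop, Set.mem_ofPred_eq]
  constructor
  · rintro ⟨y, cs, hcs, hy⟩
    exact ⟨fourierMotzkin cs, ⟨cs, hcs, rfl⟩, by rw [cell_fourierMotzkin]; exact ⟨y, hy⟩⟩
  · rintro ⟨_, ⟨cs, hcs, rfl⟩, hx⟩
    rw [cell_fourierMotzkin] at hx
    obtain ⟨y, hy⟩ := hx
    exact ⟨y, cs, hcs, hy⟩

end IsSemilinear

/-! ### The floor/fractional-part normal form -/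

section FloorFract
variable {n : ℕ}

noncomputable def floorVec (x : Fin n → ℝ) : Fin n → ℤ := Int.floor ∘ x

noncomputable def fractVec (x : Fin n → ℝ) : Fin n → ℝ := Int.fract ∘ x

lemma floorVec_snoc (x : Fin n → ℝ) (y : ℝ) :
    floorVec (Fin.snoc x y : Fin (n + 1) → ℝ) = Fin.snoc (floorVec x) ⌊y⌋ :=
  Fin.comp_snoc _ _ _

lemma fractVec_snoc (x : Fin n → ℝ) (y : ℝ) :
    fractVec (Fin.snoc x y : Fin (n + 1) → ℝ) = Fin.snoc (fractVec x) (Int.fract y) :=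
  Fin.comp_snoc _ _ _

lemma setOf_exists_snoc_mem_floorVec_preimage_inter (Z : Set (Fin (n + 1) → ℤ))
    (D : Set (Fin (n + 1) → ℝ)) :
    {x : Fin n → ℝ | ∃ y, Fin.snoc x y ∈ floorVec ⁻¹' Z ∩ fractVec ⁻¹' D} =
      floorVec ⁻¹' {z | ∃ m : ℤ, Fin.snoc z m ∈ Z} ∩
        fractVec ⁻¹' {u | ∃ f, Fin.snoc u f ∈ D ∩ {v | v (Fin.last n) ∈ Set.Ico 0 1}} := by
  ext x
  simp only [Set.mem_ofPred_eq, Set.mem_inter_iff, Set.mem_preimage, floorVec_snoc,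
    fractVec_snoc, Fin.snoc_last]
  constructor
  · rintro ⟨y, hZ, hD⟩
    exact ⟨⟨_, hZ⟩, _, hD, Int.fract_nonneg y, Int.fract_lt_one y⟩
  · rintro ⟨⟨m, hm⟩, f, hD, hf⟩
    refine ⟨m + f, ?_, ?_⟩
    · rwa [Int.floor_intCast_add, Int.floor_eq_zero_iff.2 hf, add_zero]
    · rwa [Int.fract_intCast_add, Int.fract_eq_self.2 hf]

/-- The quantifier-free normal form of `⟨ℝ,+,<,ℤ⟩`-definable sets. -/
def IsFloorFract (X : Set (Fin n → ℝ)) : Prop :=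
  ∃ P : List (Set (Fin n → ℤ) × Set (Fin n → ℝ)),
    (∀ p ∈ P, IsSemilinear p.2) ∧ X = ⋃ p ∈ P, floorVec ⁻¹' p.1 ∩ fractVec ⁻¹' p.2

namespace IsFloorFract
variable {X Y : Set (Fin n → ℝ)}

lemma empty : IsFloorFract (∅ : Set (Fin n → ℝ)) := ⟨[], by simp, by simp⟩

lemma floor_preimage (Z : Set (Fin n → ℤ)) : IsFloorFract (floorVec ⁻¹' Z) :=
  ⟨[(Z, Set.univ)], by simpa using IsSemilinear.univ, by simp⟩

lemma fract_preimage {D : Set (Fin n → ℝ)} (hD : IsSemilinear D) :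
    IsFloorFract (fractVec ⁻¹' D) :=
  ⟨[(Set.univ, D)], by simpa using hD, by simp⟩

lemma union (hX : IsFloorFract X) (hY : IsFloorFract Y) : IsFloorFract (X ∪ Y) := by
  obtain ⟨P, hP, rfl⟩ := hX
  obtain ⟨Q, hQ, rfl⟩ := hY
  refine ⟨P ++ Q, by simpa [or_imp, forall_and] using And.intro hP hQ, ?_⟩
  ext; simp [or_and_right, and_or_left, exists_or]

lemma inter (hX : IsFloorFract X) (hY : IsFloorFract Y) : IsFloorFract (X ∩ Y) := by
  obtain ⟨P, hP, rfl⟩ := hX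
  obtain ⟨Q, hQ, rfl⟩ := hY
  refine ⟨P.flatMap fun p => Q.map fun q => (p.1 ∩ q.1, p.2 ∩ q.2), ?_, ?_⟩
  · simp only [List.mem_flatMap, List.mem_map]
    rintro _ ⟨p, hp, q, hq, rfl⟩
    exact (hP p hp).inter (hQ q hq)
  · ext x
    simp only [Set.mem_inter_iff, Set.mem_iUnion, Set.mem_preimage, List.mem_flatMap,
      List.mem_map, exists_prop]
    constructor
    · rintro ⟨⟨p, hp, hp1, hp2⟩, q, hq, hq1, hq2⟩
      exact ⟨_, ⟨p, hp, q, hq, rfl⟩, ⟨hp1, hq1⟩, hp2, hq2⟩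
    · rintro ⟨_, ⟨p, hp, q, hq, rfl⟩, ⟨hp1, hq1⟩, hp2, hq2⟩
      exact ⟨⟨p, hp, hp1, hp2⟩, q, hq, hq1, hq2⟩

lemma compl (hX : IsFloorFract X) : IsFloorFract Xᶜ := by
  obtain ⟨P, hP, rfl⟩ := hX
  induction P with
  | nil => simpa using floor_preimage Set.univ
  | cons p P ih =>
    simp only [List.mem_cons, forall_eq_or_imp] at hP
    have hp : IsFloorFract (floorVec ⁻¹' p.1 ∩ fractVec ⁻¹' p.2)ᶜ := by
      rw [Set.compl_inter, ← Set.preimage_compl, ← Set.preimage_compl]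
      exact (floor_preimage _).union (fract_preimage hP.1.compl)
    simpa [Set.compl_union] using hp.inter (ih hP.2)

lemma biUnion {ι : Type*} (s : Finset ι) {X : ι → Set (Fin n → ℝ)}
    (h : ∀ i ∈ s, IsFloorFract (X i)) : IsFloorFract (⋃ i ∈ s, X i) := by
  rw [← Finset.sup_set_eq_biUnion]
  exact Finset.sup_induction empty (fun _ hX _ hY => hX.union hY) h

lemma exists_snoc {X : Set (Fin (n + 1) → ℝ)} (hX : IsFloorFract X) :
    IsFloorFract {x : Fin n → ℝ | ∃ y, Fin.snoc x y ∈ X} := by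
  obtain ⟨P, hP, rfl⟩ := hX
  refine ⟨P.map fun p => ({z | ∃ m : ℤ, Fin.snoc z m ∈ p.1},
    {u | ∃ f, Fin.snoc u f ∈ p.2 ∩ {v | v (Fin.last n) ∈ Set.Ico 0 1}}), ?_, ?_⟩
  · simp only [List.mem_map]
    rintro _ ⟨p, hp, rfl⟩
    exact ((hP p hp).inter IsSemilinear.setOf_last_mem_Ico).exists_snoc
  · simp only [List.mem_map, Set.iUnion_exists, Set.biUnion_and', Set.iUnion_iUnion_eq_right,
      ← setOf_exists_snoc_mem_floorVec_preimage_inter]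
    ext x
    simp only [Set.mem_ofPred_eq, Set.mem_iUnion, exists_prop]
    exact ⟨fun ⟨y, p, hp, hy⟩ => ⟨p, hp, y, hy⟩, fun ⟨p, hp, y, hy⟩ => ⟨y, p, hp, hy⟩⟩

end IsFloorFract

end FloorFract

section Atoms
variable {n : ℕ}

lemma intCast_dotProduct_eq_floorVec_add_fractVec (c : Fin n → ℤ) (x : Fin n → ℝ) :
    (fun j => (c j : ℝ)) ⬝ᵥ x =
      ((c ⬝ᵥ floorVec x : ℤ) : ℝ) + (fun j => (c j : ℝ)) ⬝ᵥ fractVec x := by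
  simp only [dotProduct, floorVec, fractVec, Function.comp_apply, Int.cast_sum, Int.cast_mul,
    ← Finset.sum_add_distrib, ← mul_add, Int.floor_add_fract]

lemma abs_intCast_dotProduct_fractVec_le (c : Fin n → ℤ) (x : Fin n → ℝ) :
    |(fun j => (c j : ℝ)) ⬝ᵥ fractVec x| ≤ ((∑ j, |c j| : ℤ) : ℝ) := by
  push_cast
  refine (Finset.abs_sum_le_sum_abs _ _).trans (Finset.sum_le_sum fun j _ => ?_)
  rw [abs_mul, fractVec, Function.comp_apply, abs_of_nonneg (Int.fract_nonneg (x j))]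
  exact mul_le_of_le_one_right (abs_nonneg _) (Int.fract_lt_one _).le

lemma isFloorFract_intCast_dotProduct_lt (c : Fin n → ℤ) :
    IsFloorFract {x | (fun j => (c j : ℝ)) ⬝ᵥ x < 0} := by
  obtain ⟨B, hB⟩ : ∃ B : ℤ, ∀ x, |(fun j => (c j : ℝ)) ⬝ᵥ fractVec x| ≤ B :=
    ⟨_, abs_intCast_dotProduct_fractVec_le c⟩
  -- `c ⬝ᵥ x = c ⬝ᵥ ⌊x⌋ + c ⬝ᵥ {x}` with `|c ⬝ᵥ {x}| ≤ B`, so `c ⬝ᵥ ⌊x⌋` alone decides the sign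
  -- unless it lies in `[-B, B]`
  have key : {x | (fun j => (c j : ℝ)) ⬝ᵥ x < 0} = floorVec ⁻¹' {z | c ⬝ᵥ z < -B} ∪
      ⋃ m ∈ Finset.Icc (-B) B, floorVec ⁻¹' {z | c ⬝ᵥ z = m} ∩
        fractVec ⁻¹' {u | (fun j => (c j : ℝ)) ⬝ᵥ u + m < 0} := by
    ext x
    have hBx := abs_le.1 (hB x)
    simp only [Set.mem_ofPred_eq, Set.mem_union, Set.mem_preimage, Set.mem_iUnion,
      Set.mem_inter_iff, Finset.mem_Icc, exists_prop,
      intCast_dotProduct_eq_floorVec_add_fractVec c x]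
    constructor
    · intro h
      by_cases hlt : c ⬝ᵥ floorVec x < -B
      · exact Or.inl hlt
      · refine Or.inr ⟨_, ⟨not_lt.1 hlt, ?_⟩, rfl, by linarith⟩
        exact_mod_cast (show ((c ⬝ᵥ floorVec x : ℤ) : ℝ) ≤ B by linarith)
    · rintro (h | ⟨m, -, hm, h⟩)
      · have : ((c ⬝ᵥ floorVec x : ℤ) : ℝ) ≤ -B - 1 := by exact_mod_cast (by omega)
        linarith
      · rw [hm]; linarith
  rw [key]
  exact (IsFloorFract.floor_preimage _).union <| IsFloorFract.biUnion _ fun m _ =>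
    (IsFloorFract.floor_preimage _).inter
      (IsFloorFract.fract_preimage (IsSemilinear.setOf_dotProduct_add_lt _ _))

lemma isFloorFract_intCast_dotProduct_mem_range (c : Fin n → ℤ) :
    IsFloorFract {x | ∃ k : ℤ, (fun j => (c j : ℝ)) ⬝ᵥ x = k} := by
  obtain ⟨B, hB⟩ : ∃ B : ℤ, ∀ x, |(fun j => (c j : ℝ)) ⬝ᵥ fractVec x| ≤ B :=
    ⟨_, abs_intCast_dotProduct_fractVec_le c⟩
  have key : {x | ∃ k : ℤ, (fun j => (c j : ℝ)) ⬝ᵥ x = k} =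
      ⋃ m ∈ Finset.Icc (-B) B, fractVec ⁻¹' {u | (fun j => (c j : ℝ)) ⬝ᵥ u = m} := by
    ext x
    have hBx := abs_le.1 (hB x)
    simp only [Set.mem_ofPred_eq, Set.mem_preimage, Set.mem_iUnion, Finset.mem_Icc,
      exists_prop, intCast_dotProduct_eq_floorVec_add_fractVec c x]
    constructor
    · rintro ⟨k, hk⟩
      have hk' : (((k - c ⬝ᵥ floorVec x : ℤ)) : ℝ) = (fun j => (c j : ℝ)) ⬝ᵥ fractVec x := by
        push_cast; linarith
      refine ⟨k - c ⬝ᵥ floorVec x, ⟨?_, ?_⟩, hk'.symm⟩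
      · exact_mod_cast (show ((-B : ℤ) : ℝ) ≤ ((k - c ⬝ᵥ floorVec x : ℤ) : ℝ) by
          rw [hk']; push_cast; linarith)
      · exact_mod_cast (show ((k - c ⬝ᵥ floorVec x : ℤ) : ℝ) ≤ B by rw [hk']; linarith)
    · rintro ⟨m, -, hm⟩
      exact ⟨c ⬝ᵥ floorVec x + m, by push_cast; rw [hm]⟩
  rw [key]
  exact IsFloorFract.biUnion _ fun m _ =>
    IsFloorFract.fract_preimage (IsSemilinear.setOf_dotProduct_eq _ _)

end Atoms

/-! ### Quantifier elimination -/

section Definable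
open FirstOrder.Language

lemma LsLang.exists_realize_eq_dotProduct {α β : Type*} [Fintype β] (e : α → β)
    (t : LsLang.Term α) :
    ∃ c : β → ℤ, ∀ w : β → ℝ, t.realize (w ∘ e) = (fun j => (c j : ℝ)) ⬝ᵥ w := by
  classical
  induction t with
  | var s => exact ⟨Pi.single (e s) 1, fun w => by simp [dotProduct, Pi.single_apply]⟩
  | @func l f ts ih =>
    match l, f with
    | 2, f =>
      obtain ⟨c₀, hc₀⟩ := ih 0
      obtain ⟨c₁, hc₁⟩ := ih 1
      refine ⟨c₀ + c₁, fun w => ?_⟩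
      change (ts 0).realize (w ∘ e) + (ts 1).realize (w ∘ e) = _
      simp [hc₀, hc₁, dotProduct, add_mul, Finset.sum_add_distrib]

lemma LsLang.exists_realize_sumElim_eq_dotProduct {n k : ℕ} (t : LsLang.Term (Fin n ⊕ Fin k)) :
    ∃ c : Fin (n + k) → ℤ, ∀ w : Fin (n + k) → ℝ,
      t.realize (Sum.elim (w ∘ Fin.castAdd k) (w ∘ Fin.natAdd n)) = (fun j => (c j : ℝ)) ⬝ᵥ w := by
  simpa only [← Sum.comp_elim] using
    LsLang.exists_realize_eq_dotProduct (Sum.elim (Fin.castAdd k) (Fin.natAdd n)) t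

lemma intCast_sub_dotProduct {n : ℕ} (c d : Fin n → ℤ) (w : Fin n → ℝ) :
    (fun j => ((c - d) j : ℝ)) ⬝ᵥ w = (fun j => (c j : ℝ)) ⬝ᵥ w - (fun j => (d j : ℝ)) ⬝ᵥ w := by
  simp [dotProduct, sub_mul]

lemma isFloorFract_realize_boundedFormula {n : ℕ} :
    ∀ {k} (φ : LsLang.BoundedFormula (Fin n) k),
      IsFloorFract {w : Fin (n + k) → ℝ | φ.Realize (w ∘ Fin.castAdd k) (w ∘ Fin.natAdd n)} := by
  intro k φ
  induction φ with
  | falsum => convert IsFloorFract.empty; ext; simp [BoundedFormula.Realize]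
  | @equal k t₁ t₂ =>
    obtain ⟨c₁, hc₁⟩ := LsLang.exists_realize_sumElim_eq_dotProduct t₁
    obtain ⟨c₂, hc₂⟩ := LsLang.exists_realize_sumElim_eq_dotProduct t₂
    convert (isFloorFract_intCast_dotProduct_lt (c₁ - c₂)).compl.inter
      (isFloorFract_intCast_dotProduct_lt (c₂ - c₁)).compl using 1
    ext w
    simp only [Set.mem_ofPred_eq, Set.mem_inter_iff, Set.mem_compl_iff, BoundedFormula.Realize,
      hc₁, hc₂, intCast_sub_dotProduct, not_lt, sub_nonneg]
    exact ⟨fun h => ⟨h.ge, h.le⟩, fun h => le_antisymm h.2 h.1⟩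
  | @rel k l R ts =>
    match l, R with
    | 1, R =>
      obtain ⟨c, hc⟩ := LsLang.exists_realize_sumElim_eq_dotProduct (ts 0)
      convert isFloorFract_intCast_dotProduct_mem_range c using 1
      ext w
      change (∃ m : ℤ, (ts 0).realize (Sum.elim (w ∘ Fin.castAdd k) (w ∘ Fin.natAdd n)) = m) ↔ _
      simp only [hc, Set.mem_ofPred_eq]
    | 2, R =>
      obtain ⟨c₀, hc₀⟩ := LsLang.exists_realize_sumElim_eq_dotProduct (ts 0)
      obtain ⟨c₁, hc₁⟩ := LsLang.exists_realize_sumElim_eq_dotProduct (ts 1)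
      convert isFloorFract_intCast_dotProduct_lt (c₀ - c₁) using 1
      ext w
      change (ts 0).realize (Sum.elim (w ∘ Fin.castAdd k) (w ∘ Fin.natAdd n)) <
        (ts 1).realize (Sum.elim (w ∘ Fin.castAdd k) (w ∘ Fin.natAdd n)) ↔ _
      simp only [hc₀, hc₁, Set.mem_ofPred_eq, intCast_sub_dotProduct, sub_neg]
  | imp φ ψ ihφ ihψ =>
    convert ihφ.compl.union ihψ using 1
    ext; simp [imp_iff_not_or]
  | @all k φ ih =>
    have h : IsFloorFract {w : Fin (n + k) → ℝ | ∃ y, Fin.snoc w y ∈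
        {w : Fin (n + (k + 1)) → ℝ | φ.Realize (w ∘ Fin.castAdd (k + 1)) (w ∘ Fin.natAdd n)}ᶜ}ᶜ :=
      ih.compl.exists_snoc.compl
    convert h using 1
    ext w
    simp only [Set.mem_ofPred_eq, Set.mem_compl_iff, not_exists, not_not,
      BoundedFormula.realize_all]
    refine forall_congr' fun y => ?_
    change _ ↔ φ.Realize (Fin.snoc w y ∘ Fin.castAdd (k + 1)) (Fin.snoc w y ∘ Fin.natAdd n)
    rw [Fin.snoc_comp_castAdd, Fin.snoc_comp_natAdd]

lemma LsDefinable.isFloorFract {n : ℕ} {X : Set (Fin n → ℝ)} (hX : LsDefinable X) :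
    IsFloorFract X := by
  obtain ⟨φ, rfl⟩ := Set.empty_definable_iff.1 hX
  have h : IsFloorFract {w : Fin n → ℝ |
      BoundedFormula.Realize φ (w ∘ Fin.castAdd 0) (w ∘ Fin.natAdd n)} :=
    isFloorFract_realize_boundedFormula φ
  convert h using 1
  ext w
  change Formula.Realize φ w ↔ BoundedFormula.Realize φ w (w ∘ Fin.natAdd n (m := 0))
  exact iff_of_eq (congrArg (BoundedFormula.Realize φ w) (Subsingleton.elim _ _))

end Definable

/-! ### Germs -/

section Germs
variable {n : ℕ} {X Y : Set (Fin n → ℝ)} {x y z : Fin n → ℝ}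

lemma simX_iff_eventually : SimX X x y ↔ ∀ᶠ w in 𝓝 0, (x + w ∈ X ↔ y + w ∈ X) := by
  simp [SimX, Metric.eventually_nhds_iff]

lemma SimX.symm (h : SimX X x y) : SimX X y x := by
  rw [simX_iff_eventually] at h ⊢
  exact h.mono fun _ => Iff.symm

lemma SimX.trans (h₁ : SimX X x y) (h₂ : SimX X y z) : SimX X x z := by
  rw [simX_iff_eventually] at h₁ h₂ ⊢
  exact (h₁.and h₂).mono fun _ h => h.1.trans h.2

lemma SimX.setOf_eq (h : SimX X x y) : {z | SimX X x z} = {z | SimX X y z} := by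
  ext z
  exact ⟨h.symm.trans, h.trans⟩

lemma IsStratum.of_simX {v : Fin n → ℝ} (hsim : SimX X x y) (hv : IsStratum X x v) :
    IsStratum X y v := by
  obtain ⟨r₀, hr₀, hiff⟩ := hsim
  obtain ⟨r, hr, hstr⟩ := hv
  -- translate the configuration at `y` back to `x`, where `v` is a stratum
  refine ⟨min r r₀, lt_min hr hr₀, fun y' hy' ⟨z, ⟨hzX, hz⟩, α, hza⟩ => ?_⟩
  rw [Metric.mem_ball, dist_eq_norm, lt_min_iff] at hy' hz
  have hx' : x + (y' - y) ∈ X := by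
    refine hstr _ (by simpa using hy'.1) ⟨x + (z - y), ⟨?_, by simpa using hz.1⟩, α, ?_⟩
    · rwa [hiff _ hz.2, add_sub_cancel]
    · rw [hza]; abel
  rwa [hiff _ hy'.2, add_sub_cancel] at hx'

lemma strata_eq_of_simX (h : SimX X x y) : {v | IsStratum X x v} = {v | IsStratum X y v} := by
  ext v
  exact ⟨IsStratum.of_simX h, IsStratum.of_simX h.symm⟩

def FiniteGerms (X : Set (Fin n → ℝ)) : Prop :=
  ∃ (T : Type) (_ : Finite T) (τ : (Fin n → ℝ) → T), ∀ x y, τ x = τ y → SimX X x y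

namespace FiniteGerms

lemma finite_range {α : Type*} {G : (Fin n → ℝ) → α} (hX : FiniteGerms X)
    (hG : ∀ x y, SimX X x y → G x = G y) : {S | ∃ x, S = G x}.Finite := by
  obtain ⟨T, _, τ, hτ⟩ := hX
  refine (Set.finite_range fun t => G (Function.invFun τ t)).subset ?_
  rintro _ ⟨x, rfl⟩
  exact ⟨τ x, hG _ _ (hτ _ _ (Function.invFun_eq ⟨x, rfl⟩))⟩

lemma compl (hX : FiniteGerms X) : FiniteGerms Xᶜ := by
  obtain ⟨T, _, τ, hτ⟩ := hX
  refine ⟨T, inferInstance, τ, fun x y h => ?_⟩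
  have := hτ x y h
  rw [simX_iff_eventually] at this ⊢
  exact this.mono fun w h => not_congr h

lemma inter (hX : FiniteGerms X) (hY : FiniteGerms Y) : FiniteGerms (X ∩ Y) := by
  obtain ⟨T, _, τ, hτ⟩ := hX
  obtain ⟨T', _, τ', hτ'⟩ := hY
  refine ⟨T × T', inferInstance, fun x => (τ x, τ' x), fun x y h => ?_⟩
  have hX := hτ x y (congrArg Prod.fst h)
  have hY := hτ' x y (congrArg Prod.snd h)
  rw [simX_iff_eventually] at hX hY ⊢
  exact (hX.and hY).mono fun w h => and_congr h.1 h.2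

lemma univ : FiniteGerms (Set.univ : Set (Fin n → ℝ)) :=
  ⟨Unit, inferInstance, fun _ => (), fun _ _ _ => ⟨1, one_pos, by simp⟩⟩

lemma biInter {ι : Type*} (l : List ι) {X : ι → Set (Fin n → ℝ)}
    (h : ∀ i ∈ l, FiniteGerms (X i)) : FiniteGerms (⋂ i ∈ l, X i) := by
  induction l with
  | nil => simpa using univ
  | cons a l ih =>
    simp only [List.mem_cons, forall_eq_or_imp] at h
    simpa [Set.iInter_or, Set.iInter_inter_distrib] using (h.1.inter (ih h.2))

lemma biUnion {ι : Type*} (l : List ι) {X : ι → Set (Fin n → ℝ)}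
    (h : ∀ i ∈ l, FiniteGerms (X i)) : FiniteGerms (⋃ i ∈ l, X i) := by
  simpa using (biInter l fun i hi => (h i hi).compl).compl

end FiniteGerms

end Germs

section LocalStructure
variable {n : ℕ}

lemma eventually_floor_add (a : ℝ) :
    ∀ᶠ t in 𝓝 0, ⌊a + t⌋ = ⌊a⌋ - if Int.fract a = 0 ∧ t < 0 then 1 else 0 := by
  by_cases ha : Int.fract a = 0
  · obtain ⟨m, rfl⟩ := Int.fract_eq_zero_iff.1 ha
    filter_upwards [Ioo_mem_nhds (show (-1 : ℝ) < 0 by norm_num) one_pos] with t ⟨ht₁, ht₂⟩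
    simp only [Int.fract_intCast, Int.floor_intCast, true_and]
    rw [Int.floor_eq_iff]
    split_ifs with h
    · push_cast; constructor <;> linarith
    · have := not_lt.1 h
      push_cast; constructor <;> linarith
  · have h₀ : 0 < Int.fract a := (Int.fract_nonneg a).lt_of_ne' ha
    have h₁ := Int.fract_lt_one a
    filter_upwards [Ioo_mem_nhds (neg_neg_of_pos h₀) (sub_pos.2 h₁)] with t ⟨ht₁, ht₂⟩
    rw [if_neg (by tauto), sub_zero, Int.floor_eq_iff]
    have := Int.floor_add_fract a
    constructor <;> linarith

def integerCoords (x : Fin n → ℝ) : Set (Fin n) := {j | Int.fract (x j) = 0}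

lemma eventually_floorVec_fractVec_add (x : Fin n → ℝ) :
    ∀ᶠ w in 𝓝 0,
      floorVec (x + w) = floorVec x - (integerCoords x ∩ {j | w j < 0}).indicator 1 ∧
      fractVec (x + w) = fractVec x + (integerCoords x ∩ {j | w j < 0}).indicator 1 + w := by
  have h := eventually_all.2 fun j =>
    ((continuous_apply j).tendsto' (0 : Fin n → ℝ) 0 rfl).eventually (eventually_floor_add (x j))
  filter_upwards [h] with w hw
  constructor <;> funext j
  · simp [floorVec, Set.indicator_apply, hw j, integerCoords]
  · simp only [fractVec, Function.comp_apply, Pi.add_apply, Set.indicator_apply, integerCoords,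
      Set.mem_inter_iff, Set.mem_ofPred_eq, Pi.one_apply]
    rw [← Int.self_sub_floor (x j + w j), hw j]
    split_ifs <;> rw [← Int.self_sub_floor (x j)] <;> push_cast <;> ring

lemma AffineIneq.eventually_holds_add_iff (c : AffineIneq n) {u v : Fin n → ℝ}
    (h : SignType.sign (c.eval u) = SignType.sign (c.eval v)) :
    ∀ᶠ w in 𝓝 0, (c.Holds (u + w) ↔ c.Holds (v + w)) := by
  have hlim : ∀ u, Tendsto (fun w => c.eval (u + w)) (𝓝 0) (𝓝 (c.eval u)) := fun u => by
    have : Continuous fun w => c.eval (u + w) := by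
      unfold AffineIneq.eval; fun_prop
    simpa using this.tendsto 0
  rcases lt_trichotomy (c.eval u) 0 with hu | hu | hu
  · rw [sign_neg hu, eq_comm, sign_eq_neg_one_iff] at h
    filter_upwards [(hlim u).eventually_lt_const hu, (hlim v).eventually_lt_const h] with w hu hv
    exact iff_of_true (holds_of_eval_neg hu) (holds_of_eval_neg hv)
  · rw [hu, sign_zero, eq_comm, sign_eq_zero_iff] at h
    refine .of_forall fun w => ?_
    unfold AffineIneq.Holds
    rw [eval_add, eval_add, hu, h]
  · rw [sign_pos hu, eq_comm, sign_eq_one_iff] at h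
    filter_upwards [(hlim u).eventually_const_lt hu, (hlim v).eventually_const_lt h] with w hu hv
    exact iff_of_false (not_holds_of_eval_pos hu) (not_holds_of_eval_pos hv)

namespace FiniteGerms

lemma floorVec_preimage (Z : Set (Fin n → ℤ)) : FiniteGerms (floorVec ⁻¹' Z) := by
  refine ⟨Set (Fin n) × (Set (Fin n) → Prop), inferInstance,
    fun x => (integerCoords x, fun S => floorVec x - S.indicator 1 ∈ Z), fun x y h => ?_⟩
  obtain ⟨hJ, hZ⟩ := Prod.mk.inj h
  rw [simX_iff_eventually]
  filter_upwards [eventually_floorVec_fractVec_add x, eventually_floorVec_fractVec_add y]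
    with w hx hy
  rw [Set.mem_preimage, Set.mem_preimage, hx.1, hy.1, hJ]
  exact iff_of_eq (congrFun hZ _)

lemma fractVec_preimage_holds (c : AffineIneq n) :
    FiniteGerms (fractVec ⁻¹' {u | c.Holds u}) := by
  refine ⟨Set (Fin n) × (Set (Fin n) → SignType), inferInstance,
    fun x => (integerCoords x, fun S => SignType.sign (c.eval (fractVec x + S.indicator 1))),
    fun x y h => ?_⟩
  obtain ⟨hJ, hsign⟩ := Prod.mk.inj h
  rw [simX_iff_eventually]
  filter_upwards [eventually_floorVec_fractVec_add x, eventually_floorVec_fractVec_add y,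
    eventually_all.2 fun S => c.eventually_holds_add_iff (congrFun hsign S)] with w hx hy hS
  rw [Set.mem_preimage, Set.mem_preimage, hx.2, hy.2, hJ]
  exact hS _

lemma fractVec_preimage {D : Set (Fin n → ℝ)} (hD : IsSemilinear D) :
    FiniteGerms (fractVec ⁻¹' D) := by
  obtain ⟨P, rfl⟩ := hD
  have hcell : ∀ cs : List (AffineIneq n), cell cs = ⋂ c ∈ cs, {u | c.Holds u} := fun cs => by
    ext; simp [cell]
  simp only [Set.preimage_iUnion₂, hcell, Set.preimage_iInter₂]
  exact biUnion P fun cs _ => biInter cs fun c _ => fractVec_preimage_holds c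

end FiniteGerms

lemma IsFloorFract.finiteGerms {X : Set (Fin n → ℝ)} (hX : IsFloorFract X) : FiniteGerms X := by
  obtain ⟨P, hP, rfl⟩ := hX
  exact FiniteGerms.biUnion P fun p hp =>
    (FiniteGerms.floorVec_preimage p.1).inter (FiniteGerms.fractVec_preimage (hP p hp))

end LocalStructure

/-- For a `⟨ℝ,+,<,ℤ⟩`-definable set: `∼_X` has finitely many classes, and the family of
spaces of strata is finite. -/
theorem stmt8 (n : ℕ) (X : Set (Fin n → ℝ)) (hX : LsDefinable X) :
    {C : Set (Fin n → ℝ) | ∃ x, C = {y | SimX X x y}}.Finite ∧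
    {S : Set (Fin n → ℝ) | ∃ x, S = {v | IsStratum X x v}}.Finite := by
  have h := hX.isFloorFract.finiteGerms
  exact ⟨h.finite_range fun _ _ => SimX.setOf_eq, h.finite_range fun _ _ => strata_eq_of_simX⟩
end

section
/- If X ⊆ ℝ^n is ⟨ℝ,+,<,1⟩-definable then the set of X-singular points is finite, and every X-singular point has all of its coordinates rational. -/
open FirstOrder

/-!
A `⟨ℝ,+,<,1⟩`-definable set is semilinear over `ℚ`: it is a union of sign classes of finitely
many affine functions with rational coefficients. For terms this is clear, Boolean connectives
are harmless, and a quantifier is eliminated à la Fourier–Motzkin: after scaling, every function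
involving the eliminated variable `t` reads `t - θ(p)`, and whether some `t` works only depends
on the relative order of the values `θ(p)`.

Near a point `x`, the functions not vanishing at `x` keep their signs, so every direction in the
common kernel of the linear parts of the functions vanishing at `x` is a stratum. At a singular
point this kernel is trivial, so `x` is the unique solution of a rational linear system, hence
rational; and it is determined by which functions vanish at it, so there are finitely many.
-/

namespace RatSemilinear

open SignType FirstOrder Language

section AffineEval

variable {ι : Type*} [Fintype ι]

def linEval (a : ι → ℚ) (x : ι → ℝ) : ℝ := ∑ i, (a i : ℝ) * x i

/-- The pair `(a, b)` stands for the rational affine function `x ↦ a ⬝ x + b`. -/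
def affEval (A : (ι → ℚ) × ℚ) (x : ι → ℝ) : ℝ := linEval A.1 x + A.2

@[simp]
lemma linEval_zero_left (x : ι → ℝ) : linEval 0 x = 0 := by
  simp [linEval]

lemma linEval_add_left (a b : ι → ℚ) (x : ι → ℝ) :
    linEval (a + b) x = linEval a x + linEval b x := by
  simp [linEval, add_mul, Finset.sum_add_distrib]

lemma linEval_smul_left (q : ℚ) (a : ι → ℚ) (x : ι → ℝ) :
    linEval (q • a) x = q * linEval a x := by
  simp [linEval, Finset.mul_sum, mul_assoc]

lemma linEval_sub_left (a b : ι → ℚ) (x : ι → ℝ) :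
    linEval (a - b) x = linEval a x - linEval b x := by
  simp [linEval, sub_mul, Finset.sum_sub_distrib]

lemma linEval_sub_right (a : ι → ℚ) (x y : ι → ℝ) :
    linEval a (x - y) = linEval a x - linEval a y := by
  simp [linEval, mul_sub, Finset.sum_sub_distrib]

lemma linEval_add_smul_right (a : ι → ℚ) (x v : ι → ℝ) (α : ℝ) :
    linEval a (x + α • v) = linEval a x + α * linEval a v := by
  simp [linEval, mul_add, Finset.sum_add_distrib, Finset.mul_sum, mul_left_comm]

lemma linEval_single [DecidableEq ι] (i : ι) (x : ι → ℝ) :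
    linEval (Pi.single i 1) x = x i := by
  simp [linEval, Pi.single_apply, apply_ite (Rat.cast : ℚ → ℝ)]

lemma linEval_cast (a w : ι → ℚ) :
    linEval a (fun i => (w i : ℝ)) = ((∑ i, a i * w i : ℚ) : ℝ) := by
  simp [linEval]

lemma continuous_linEval (a : ι → ℚ) : Continuous (linEval a) := by
  unfold linEval
  fun_prop

lemma affEval_add (A B : (ι → ℚ) × ℚ) (x : ι → ℝ) :
    affEval (A + B) x = affEval A x + affEval B x := by
  simp only [affEval, Prod.fst_add, Prod.snd_add, linEval_add_left, Rat.cast_add]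
  ring

lemma affEval_sub (A B : (ι → ℚ) × ℚ) (x : ι → ℝ) :
    affEval (A - B) x = affEval A x - affEval B x := by
  simp only [affEval, Prod.fst_sub, Prod.snd_sub, linEval_sub_left, Rat.cast_sub]
  ring

lemma affEval_eq_iff_sign (A B : (ι → ℚ) × ℚ) (x : ι → ℝ) :
    affEval A x = affEval B x ↔ sign (affEval (A - B) x) = 0 := by
  rw [sign_eq_zero_iff, affEval_sub, sub_eq_zero]

lemma affEval_lt_iff_sign (A B : (ι → ℚ) × ℚ) (x : ι → ℝ) :
    affEval A x < affEval B x ↔ sign (affEval (A - B) x) = -1 := by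
  rw [sign_eq_neg_one_iff, affEval_sub, sub_neg]

lemma affEval_smul (q : ℚ) (A : (ι → ℚ) × ℚ) (x : ι → ℝ) :
    affEval (q • A) x = q * affEval A x := by
  simp only [affEval, Prod.smul_fst, Prod.smul_snd, linEval_smul_left, smul_eq_mul,
    Rat.cast_mul]
  ring

lemma affEval_sub_affEval (A : (ι → ℚ) × ℚ) (x y : ι → ℝ) :
    affEval A x - affEval A y = linEval A.1 (x - y) := by
  simp only [affEval, linEval_sub_right]
  ring

lemma affEval_add_smul (A : (ι → ℚ) × ℚ) (x v : ι → ℝ) (α : ℝ) :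
    affEval A (x + α • v) = affEval A x + α * linEval A.1 v := by
  simp only [affEval, linEval_add_smul_right]
  ring

lemma continuous_affEval (A : (ι → ℚ) × ℚ) : Continuous (affEval A) :=
  (continuous_linEval A.1).add continuous_const

end AffineEval

lemma sign_mul_eq_sign_mul_iff {R : Type*} [Ring R] [LinearOrder R] [IsStrictOrderedRing R]
    {c a b : R} (hc : c ≠ 0) :
    sign (c * a) = sign (c * b) ↔ sign a = sign b := by
  rw [sign_mul, sign_mul, mul_right_inj' (sign_ne_zero.2 hc)]

section Semilinear

variable {ι κ : Type*} [Fintype ι] [Fintype κ]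

def SignDetermined (H : Finset ((ι → ℚ) × ℚ)) (X : Set (ι → ℝ)) : Prop :=
  ∀ x y, (∀ A ∈ H, sign (affEval A x) = sign (affEval A y)) → (x ∈ X ↔ y ∈ X)

def Semilinear (X : Set (ι → ℝ)) : Prop := ∃ H, SignDetermined H X

lemma Semilinear.compl {X : Set (ι → ℝ)} (hX : Semilinear X) : Semilinear Xᶜ :=
  let ⟨H, hH⟩ := hX
  ⟨H, fun x y hxy => not_iff_not.2 (hH x y hxy)⟩

lemma Semilinear.imp {X Y : Set (ι → ℝ)} (hX : Semilinear X) (hY : Semilinear Y) :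
    Semilinear {p | p ∈ X → p ∈ Y} := by
  classical
  obtain ⟨H₁, h₁⟩ := hX
  obtain ⟨H₂, h₂⟩ := hY
  refine ⟨H₁ ∪ H₂, fun x y hxy => ?_⟩
  simp only [Finset.mem_union, or_imp, forall_and] at hxy
  exact imp_congr (h₁ x y hxy.1) (h₂ x y hxy.2)

lemma Semilinear.preimage_comp {X : Set (κ → ℝ)} (hX : Semilinear X) (m : κ → ι) :
    Semilinear {v : ι → ℝ | v ∘ m ∈ X} := by
  classical
  obtain ⟨H, hH⟩ := hX
  let pullback (A : (κ → ℚ) × ℚ) : (ι → ℚ) × ℚ :=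
    (fun i => ∑ j with m j = i, A.1 j, A.2)
  have affEval_pullback (A : (κ → ℚ) × ℚ) (v : ι → ℝ) :
      affEval (pullback A) v = affEval A (v ∘ m) := by
    simp only [affEval, linEval, pullback, Function.comp_apply, Rat.cast_sum, Finset.sum_mul]
    rw [← Finset.sum_fiberwise Finset.univ m (fun j => (A.1 j : ℝ) * v (m j))]
    refine congrArg (· + _) (Finset.sum_congr rfl fun i _ => Finset.sum_congr rfl fun j hj => ?_)
    rw [(Finset.mem_filter.1 hj).2]
  refine ⟨H.image pullback, fun x y hxy => hH _ _ fun A hA => ?_⟩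
  simpa only [affEval_pullback] using hxy _ (Finset.mem_image_of_mem pullback hA)

end Semilinear

lemma exists_sign_sub_eq {K β : Type*} [Field K] [LinearOrder K] [IsStrictOrderedRing K]
    (F : Finset β) (θ θ' : β → K)
    (hθ : ∀ A ∈ F, ∀ B ∈ F, sign (θ A - θ B) = sign (θ' A - θ' B)) (t : K) :
    ∃ t', ∀ A ∈ F, sign (t' - θ' A) = sign (t - θ A) := by
  classical
  by_cases hhit : ∃ A ∈ F, θ A = t
  · obtain ⟨A₀, hA₀, rfl⟩ := hhit
    exact ⟨θ' A₀, fun B hB => (hθ A₀ hA₀ B hB).symm⟩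
  push Not at hhit
  obtain ⟨t', hbelow, habove⟩ := Finset.exists_between' ((F.filter (θ · < t)).image θ')
      ((F.filter (t < θ ·)).image θ') <| by
    simp only [Finset.mem_image, Finset.mem_filter]
    rintro _ ⟨A, ⟨hA, hAt⟩, rfl⟩ _ ⟨B, ⟨hB, htB⟩, rfl⟩
    have hAB := hθ A hA B hB
    rw [sign_neg (by linarith), eq_comm, sign_eq_neg_one_iff] at hAB
    linarith
  refine ⟨t', fun A hA => ?_⟩
  rcases (hhit A hA).lt_or_gt with h | h
  · have h' := hbelow _ (Finset.mem_image_of_mem _ (Finset.mem_filter.2 ⟨hA, h⟩))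
    rw [sign_pos (sub_pos.2 h'), sign_pos (sub_pos.2 h)]
  · have h' := habove _ (Finset.mem_image_of_mem _ (Finset.mem_filter.2 ⟨hA, h⟩))
    rw [sign_neg (sub_neg.2 h'), sign_neg (sub_neg.2 h)]

section Projection

variable {ι : Type*} [Fintype ι]

def restrictLast (A : (ι ⊕ Unit → ℚ) × ℚ) : (ι → ℚ) × ℚ := (A.1 ∘ Sum.inl, A.2)

lemma affEval_sumElim (A : (ι ⊕ Unit → ℚ) × ℚ) (p : ι → ℝ) (t : ℝ) :
    affEval A (Sum.elim p fun _ => t) = affEval (restrictLast A) p + A.1 (Sum.inr ()) * t := by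
  simp only [affEval, linEval, restrictLast, Fintype.sum_sum_type, Sum.elim_inl, Sum.elim_inr,
    Function.comp_apply, Finset.univ_unique, Finset.sum_singleton]
  ring

lemma SignDetermined.exists_normalized {H : Finset ((ι ⊕ Unit → ℚ) × ℚ)}
    {X : Set (ι ⊕ Unit → ℝ)} (hH : SignDetermined H X) :
    ∃ H', SignDetermined H' X ∧ ∀ A ∈ H', A.1 (Sum.inr ()) = 0 ∨ A.1 (Sum.inr ()) = 1 := by
  classical
  let normalize (A : (ι ⊕ Unit → ℚ) × ℚ) := (A.1 (Sum.inr ()))⁻¹ • A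
  refine ⟨H.filter (·.1 (Sum.inr ()) = 0) ∪ (H.filter (·.1 (Sum.inr ()) ≠ 0)).image normalize,
    fun x y hxy => hH x y fun A hA => ?_, ?_⟩
  · by_cases hc : A.1 (Sum.inr ()) = 0
    · exact hxy A (Finset.mem_union_left _ (Finset.mem_filter.2 ⟨hA, hc⟩))
    · have h := hxy _ (Finset.mem_union_right _
        (Finset.mem_image_of_mem normalize (Finset.mem_filter.2 ⟨hA, hc⟩)))
      rwa [affEval_smul, affEval_smul, sign_mul_eq_sign_mul_iff (by exact_mod_cast inv_ne_zero hc)]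
        at h
  · simp only [Finset.mem_union, Finset.mem_filter, Finset.mem_image]
    rintro _ (⟨-, hc⟩ | ⟨A, ⟨-, hc⟩, rfl⟩)
    · exact Or.inl hc
    · exact Or.inr (inv_mul_cancel₀ hc)

/-- Fourier–Motzkin elimination of the last coordinate. -/
lemma exists_sumElim_mem_of_signs {H : Finset ((ι ⊕ Unit → ℚ) × ℚ)} {X : Set (ι ⊕ Unit → ℝ)}
    (hH : SignDetermined H X) (hnorm : ∀ A ∈ H, A.1 (Sum.inr ()) = 0 ∨ A.1 (Sum.inr ()) = 1)
    {p p' : ι → ℝ}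
    (h₁ : ∀ A ∈ H, sign (affEval (restrictLast A) p) = sign (affEval (restrictLast A) p'))
    (h₂ : ∀ A ∈ H, ∀ B ∈ H,
      sign (affEval (restrictLast A) p - affEval (restrictLast B) p) =
        sign (affEval (restrictLast A) p' - affEval (restrictLast B) p'))
    {t : ℝ} (ht : Sum.elim p (fun _ => t) ∈ X) : ∃ t', Sum.elim p' (fun _ => t') ∈ X := by
  classical
  obtain ⟨t', ht'⟩ := exists_sign_sub_eq (H.filter (·.1 (Sum.inr ()) = 1))
    (fun A => -affEval (restrictLast A) p) (fun A => -affEval (restrictLast A) p')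
    (fun A hA B hB => by
      rw [neg_sub_neg, neg_sub_neg]
      exact h₂ B (Finset.mem_filter.1 hB).1 A (Finset.mem_filter.1 hA).1) t
  refine ⟨t', (hH _ _ fun A hA => ?_).1 ht⟩
  rw [affEval_sumElim, affEval_sumElim]
  rcases hnorm A hA with hc | hc
  · simpa [hc] using h₁ A hA
  · simpa [hc, sub_eq_add_neg, add_comm] using (ht' A (Finset.mem_filter.2 ⟨hA, hc⟩)).symm

lemma Semilinear.exists_last {X : Set (ι ⊕ Unit → ℝ)} (hX : Semilinear X) :
    Semilinear {p : ι → ℝ | ∃ t : ℝ, Sum.elim p (fun _ => t) ∈ X} := by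
  classical
  obtain ⟨H₀, hH₀⟩ := hX
  obtain ⟨H, hH, hnorm⟩ := hH₀.exists_normalized
  refine ⟨H.image restrictLast ∪ (H ×ˢ H).image fun AB => restrictLast AB.1 - restrictLast AB.2,
    fun p p' hpp' => ?_⟩
  have h₁ : ∀ A ∈ H, sign (affEval (restrictLast A) p) = sign (affEval (restrictLast A) p') :=
    fun A hA => hpp' _ (Finset.mem_union_left _ (Finset.mem_image_of_mem _ hA))
  have h₂ : ∀ A ∈ H, ∀ B ∈ H,
      sign (affEval (restrictLast A) p - affEval (restrictLast B) p) =
        sign (affEval (restrictLast A) p' - affEval (restrictLast B) p') := fun A hA B hB => by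
    simpa only [affEval_sub] using hpp' _ (Finset.mem_union_right _
      (Finset.mem_image.2 ⟨(A, B), Finset.mem_product.2 ⟨hA, hB⟩, rfl⟩))
  exact ⟨fun ⟨_, ht⟩ => exists_sumElim_mem_of_signs hH hnorm h₁ h₂ ht,
    fun ⟨_, ht⟩ => exists_sumElim_mem_of_signs hH hnorm (fun A hA => (h₁ A hA).symm)
      (fun A hA B hB => (h₂ A hA B hB).symm) ht⟩

end Projection

section Definable

variable {α : Type*} [Fintype α]

lemma exists_affEval_eq_realize (t : SsLang.Term α) :
    ∃ A : (α → ℚ) × ℚ, ∀ v, t.realize v = affEval A v := by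
  classical
  induction t with
  | var i => exact ⟨(Pi.single i 1, 0), fun v => by simp [affEval, linEval_single]⟩
  | @func l f ts ih =>
      match l, f with
      | 0, _ => exact ⟨(0, 1), fun v => by simp [affEval]; rfl⟩
      | 2, _ =>
          obtain ⟨A₀, h₀⟩ := ih 0
          obtain ⟨A₁, h₁⟩ := ih 1
          refine ⟨A₀ + A₁, fun v => ?_⟩
          show (ts 0).realize v + (ts 1).realize v = _
          rw [h₀, h₁, affEval_add]

lemma semilinear_setOf_realize {k : ℕ} (φ : SsLang.BoundedFormula α k) :
    Semilinear {p : α ⊕ Fin k → ℝ | φ.Realize (p ∘ Sum.inl) (p ∘ Sum.inr)} := by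
  classical
  induction φ with
  | falsum => exact ⟨∅, fun _ _ _ => Iff.rfl⟩
  | equal t₁ t₂ =>
      obtain ⟨A₁, h₁⟩ := exists_affEval_eq_realize t₁
      obtain ⟨A₂, h₂⟩ := exists_affEval_eq_realize t₂
      refine ⟨{A₁ - A₂}, fun x y hxy => ?_⟩
      show t₁.realize (M := ℝ) _ = t₂.realize _ ↔ t₁.realize (M := ℝ) _ = t₂.realize _
      rw [Sum.elim_comp_inl_inr, Sum.elim_comp_inl_inr, h₁, h₂, h₁, h₂, affEval_eq_iff_sign,
        affEval_eq_iff_sign, hxy _ (Finset.mem_singleton_self _)]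
  | @rel _ l R ts =>
      match l, R with
      | 2, _ =>
          obtain ⟨A₁, h₁⟩ := exists_affEval_eq_realize (ts 0)
          obtain ⟨A₂, h₂⟩ := exists_affEval_eq_realize (ts 1)
          refine ⟨{A₁ - A₂}, fun x y hxy => ?_⟩
          show (ts 0).realize (M := ℝ) _ < (ts 1).realize _ ↔
            (ts 0).realize (M := ℝ) _ < (ts 1).realize _
          rw [Sum.elim_comp_inl_inr, Sum.elim_comp_inl_inr, h₁, h₂, h₁, h₂, affEval_lt_iff_sign,
            affEval_lt_iff_sign, hxy _ (Finset.mem_singleton_self _)]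
  | imp φ ψ ihφ ihψ => exact ihφ.imp ihψ
  | @all k φ ih =>
      -- `∀ t, φ` is `¬ ∃ t, ¬ φ`, with the new variable moved to the last coordinate
      let last : α ⊕ Fin (k + 1) → (α ⊕ Fin k) ⊕ Unit :=
        Sum.elim (Sum.inl ∘ Sum.inl) (Fin.lastCases (Sum.inr ()) (Sum.inl ∘ Sum.inr))
      have hlast (p : α ⊕ Fin k → ℝ) (t : ℝ) :
          Sum.elim p (fun _ => t) ∘ last = Sum.elim (p ∘ Sum.inl) (Fin.snoc (p ∘ Sum.inr) t) := by
        funext i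
        rcases i with a | j
        · rfl
        · refine Fin.lastCases ?_ (fun j => ?_) j <;> simp [last]
      have hset : {p : α ⊕ Fin k → ℝ | (∀' φ).Realize (p ∘ Sum.inl) (p ∘ Sum.inr)} =
          {p | ∃ t : ℝ, Sum.elim p (fun _ => t) ∈ {v | v ∘ last ∈
            {p | φ.Realize (p ∘ Sum.inl) (p ∘ Sum.inr)}}ᶜ}ᶜ := by
        ext p
        simp [hlast]
      rw [hset]
      exact (ih.preimage_comp last).compl.exists_last.compl

lemma semilinear_of_ssDefinable {n : ℕ} {X : Set (Fin n → ℝ)} (hX : SsDefinable X) :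
    Semilinear X := by
  rw [SsDefinable, Set.definable_iff_exists_formula_sum] at hX
  obtain ⟨φ, rfl⟩ := hX
  let m : ((∅ : Set ℝ) ⊕ Fin n) ⊕ Fin 0 → Fin n :=
    Sum.elim (Sum.elim (fun e => e.2.elim) id) Fin.elim0
  have hm (v : Fin n → ℝ) : (v ∘ m) ∘ Sum.inl = Sum.elim (↑) v := by
    funext x
    rcases x with e | i
    · exact e.2.elim
    · rfl
  have hset : {v : Fin n → ℝ | φ.Realize (Sum.elim (↑) v)} =
      {v | v ∘ m ∈ {p | BoundedFormula.Realize φ (p ∘ Sum.inl) (p ∘ Sum.inr)}} := by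
    ext v
    simp only [Set.mem_ofPred_eq, hm, Formula.Realize, Subsingleton.elim _ (default : Fin 0 → ℝ)]
  rw [hset]
  exact (semilinear_setOf_realize φ).preimage_comp m

end Definable

section RationalSpan

variable {ι : Type*} [Fintype ι]

lemma span_eq_top_of_linEval_eq_zero {s : Set (ι → ℚ)}
    (hs : ∀ v : ι → ℝ, (∀ a ∈ s, linEval a v = 0) → v = 0) : Submodule.span ℚ s = ⊤ := by
  classical
  by_contra hne
  obtain ⟨f, hf0, hspan⟩ := (Submodule.span ℚ s).exists_le_ker_of_lt_top (lt_top_iff_ne_top.2 hne)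
  let w : ι → ℚ := fun j => f fun k => if j = k then 1 else 0
  have hfw (a : ι → ℚ) : f a = ∑ j, a j * w j := by
    simp only [LinearMap.pi_apply_eq_sum_univ f a, smul_eq_mul, w]
  have hw : (fun j => (w j : ℝ)) = 0 := hs _ fun a ha => by
    rw [linEval_cast, ← hfw, LinearMap.mem_ker.1 (hspan (Submodule.subset_span ha)), Rat.cast_zero]
  have hw0 : w = 0 := funext fun j => by simpa using congrFun hw j
  exact hf0 (LinearMap.ext fun a => by simp [hfw, hw0])

lemma exists_rat_eq_of_span_eq_top {s : Set (ι → ℚ)} (hs : Submodule.span ℚ s = ⊤) {x : ι → ℝ}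
    (hx : ∀ a ∈ s, ∃ q : ℚ, linEval a x = q) (i : ι) : ∃ q : ℚ, x i = q := by
  classical
  suffices h : ∀ a ∈ Submodule.span ℚ s, ∃ q : ℚ, linEval a x = q by
    simpa only [linEval_single] using h (Pi.single i 1) (hs ▸ Submodule.mem_top)
  intro a ha
  induction ha using Submodule.span_induction with
  | mem a ha => exact hx a ha
  | zero => exact ⟨0, by simp⟩
  | add a b _ _ ha hb =>
      obtain ⟨qa, hqa⟩ := ha
      obtain ⟨qb, hqb⟩ := hb
      exact ⟨qa + qb, by rw [linEval_add_left, hqa, hqb, Rat.cast_add]⟩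
  | smul c a _ ha =>
      obtain ⟨qa, hqa⟩ := ha
      exact ⟨c * qa, by rw [linEval_smul_left, hqa, Rat.cast_mul]⟩

end RationalSpan

section Singular

variable {ι : Type} [Fintype ι] {H : Finset ((ι → ℚ) × ℚ)} {X : Set (ι → ℝ)}

lemma SignDetermined.isStratum (hH : SignDetermined H X) {x v : ι → ℝ}
    (hv : ∀ A ∈ H, affEval A x = 0 → linEval A.1 v = 0) : IsStratum X x v := by
  have hnear : ∀ᶠ y in nhds x, ∀ A ∈ H, affEval A x ≠ 0 →
      sign (affEval A y) = sign (affEval A x) := by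
    refine (Filter.eventually_all_finset H).2 fun A _ => ?_
    by_cases h0 : affEval A x = 0
    · exact Filter.Eventually.of_forall fun _ h => absurd h0 h
    · have hcont := (continuousAt_sign_of_ne_zero h0).comp (continuous_affEval A).continuousAt
      filter_upwards [hcont.eventually_mem ((isOpen_discrete {sign (affEval A x)}).mem_nhds rfl)]
        with y hy _ using hy
  obtain ⟨r, hr, hball⟩ := Metric.eventually_nhds_iff_ball.1 hnear
  refine ⟨r, hr, ?_⟩
  rintro y hy ⟨z, ⟨hzX, hz⟩, α, rfl⟩
  refine (hH _ _ fun A hA => ?_).1 hzX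
  by_cases h0 : affEval A x = 0
  · rw [affEval_add_smul, hv A hA h0, mul_zero, add_zero]
  · rw [hball _ hz A hA h0, hball _ hy A hA h0]

lemma SignDetermined.eq_zero_of_isSingular (hH : SignDetermined H X) {x : ι → ℝ}
    (hx : IsSingular X x) {v : ι → ℝ} (hv : ∀ A ∈ H, affEval A x = 0 → linEval A.1 v = 0) :
    v = 0 :=
  hx v (hH.isStratum hv)

lemma SignDetermined.exists_rat_eq_of_isSingular (hH : SignDetermined H X) {x : ι → ℝ}
    (hx : IsSingular X x) (i : ι) : ∃ q : ℚ, x i = q := by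
  classical
  refine exists_rat_eq_of_span_eq_top (s := (H.filter (affEval · x = 0)).image Prod.fst) ?_ ?_ i
  · refine span_eq_top_of_linEval_eq_zero fun v hv => hH.eq_zero_of_isSingular hx fun A hA h0 => ?_
    exact hv _ (Finset.mem_image_of_mem _ (Finset.mem_filter.2 ⟨hA, h0⟩))
  · simp only [Finset.coe_image, Finset.coe_filter, Set.forall_mem_image, Set.mem_ofPred_eq]
    intro A ⟨_, h0⟩
    exact ⟨-A.2, by rw [affEval] at h0; rw [Rat.cast_neg]; linarith⟩

lemma SignDetermined.finite_setOf_isSingular (hH : SignDetermined H X) :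
    {x | IsSingular X x}.Finite := by
  classical
  refine Set.Finite.of_finite_image (f := fun x => H.filter (affEval · x = 0))
    (H.powerset.finite_toSet.subset ?_) fun x hx y hy hxy => ?_
  · rintro _ ⟨x, -, rfl⟩
    exact Finset.mem_coe.2 (Finset.mem_powerset.2 (Finset.filter_subset _ _))
  · replace hxy : H.filter (affEval · x = 0) = H.filter (affEval · y = 0) := hxy
    refine (sub_eq_zero.1 (hH.eq_zero_of_isSingular hx fun A hA h0 => ?_)).symm
    have hAy : A ∈ H.filter (affEval · y = 0) := hxy ▸ Finset.mem_filter.2 ⟨hA, h0⟩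
    have h0y : affEval A y = 0 := (Finset.mem_filter.1 hAy).2
    rw [← affEval_sub_affEval, h0, h0y, sub_zero]

end Singular

end RatSemilinear

/-- A `⟨ℝ,+,<,1⟩`-definable set has finitely many singular points, all with rational
coordinates. -/
theorem stmt9 (n : ℕ) (X : Set (Fin n → ℝ)) (hX : SsDefinable X) :
    {x | IsSingular X x}.Finite ∧
    ∀ x : Fin n → ℝ, IsSingular X x → ∀ i, ∃ q : ℚ, x i = (q : ℝ) := by
  obtain ⟨H, hH⟩ := RatSemilinear.semilinear_of_ssDefinable hX
  exact ⟨hH.finite_setOf_isSingular, fun _ hx => hH.exists_rat_eq_of_isSingular hx⟩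
end

section
/- If X ⊆ ℝ^n is ⟨ℝ,+,<,ℤ⟩-definable then the set of X-singular points is countable, and every X-singular point has all of its coordinates rational. -/
open FirstOrder

/-!
If `x` has an irrational coordinate `x i`, a `ℚ`-linear form on `ℝ` vanishing at `1` but not at
`x i` yields a direction `u ≠ 0` with `c ⬝ u = 0` for every integer vector `c` such that
`c ⬝ x ∈ ℤ`. Such a `u` is an `X`-stratum at `x`: otherwise there are `z k → x` and `α k → 0` with
`z k ∈ X` and `z k + α k • u ∉ X`. Terms of `⟨ℝ,+,<,ℤ⟩` are integer linear forms, so atomic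
formulas only ask whether such a form is `0`, positive or an integer. Along an ultrafilter, an
integer form either tends to `ℤ` at `z k`, in which case it is constant in direction `u`, or it
stays a fixed distance away from `ℤ`, in which case an infinitesimal move cannot change its
integer part. An induction on formulas extends this to all formulas; at a quantifier the witness
is moved along with the point, in a direction chosen so that the invariant is kept. Hence
singular points have rational coordinates, and there are countably many of them.
-/

open Filter Topology Set

section NearInt

variable {ι : Type*} {𝒰 : Ultrafilter ι}

def IsNearInt (𝒰 : Ultrafilter ι) (V : ι → ℝ) : Prop :=
  Tendsto (fun k => (V k : UnitAddCircle)) 𝒰 (𝓝 0)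

theorem IsNearInt.int_mul_sub_int_mul {V W : ι → ℝ} (hV : IsNearInt 𝒰 V) (hW : IsNearInt 𝒰 W)
    (p q : ℤ) : IsNearInt 𝒰 (fun k => p * V k - q * W k) := by
  have h := (((continuous_zsmul p).tendsto 0).comp hV).sub
    (((continuous_zsmul q).tendsto 0).comp hW)
  simpa [IsNearInt, Function.comp_def, ← zsmul_eq_mul] using h

theorem IsNearInt.add_of_tendsto_zero {V a : ι → ℝ} (hV : IsNearInt 𝒰 V)
    (ha : Tendsto a 𝒰 (𝓝 0)) : IsNearInt 𝒰 (fun k => V k + a k) := by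
  have h := hV.add (((AddCircle.continuous_mk' (1 : ℝ)).tendsto 0).comp ha)
  simpa [IsNearInt, Function.comp_def] using h

theorem IsNearInt.exists_eq_intCast_of_tendsto {V : ι → ℝ} {L : ℝ} (hV : IsNearInt 𝒰 V)
    (hL : Tendsto V 𝒰 (𝓝 L)) : ∃ z : ℤ, L = z := by
  have hL' := ((AddCircle.continuous_mk' (1 : ℝ)).tendsto L).comp hL
  obtain ⟨z, hz⟩ := (AddCircle.coe_eq_zero_iff (1 : ℝ)).1 (tendsto_nhds_unique hL' hV)
  exact ⟨z, by simpa using hz.symm⟩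

theorem exists_eventually_le_abs_sub_intCast {V : ι → ℝ} (hV : ¬IsNearInt 𝒰 V) :
    ∃ ε > 0, ∀ᶠ k in 𝒰, ∀ z : ℤ, ε ≤ |V k - z| := by
  obtain ⟨ε, hε, hV⟩ : ∃ ε > 0, ¬∀ᶠ k in 𝒰, dist (V k : UnitAddCircle) 0 < ε := by
    simpa [IsNearInt, Metric.tendsto_nhds] using hV
  refine ⟨ε, hε, (Ultrafilter.eventually_not.2 hV).mono fun k hk z => ?_⟩
  calc ε ≤ ‖(V k : UnitAddCircle)‖ := by simpa using hk
    _ = ‖((V k - z : ℝ) : UnitAddCircle)‖ := by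
      rw [AddCircle.coe_sub, (AddCircle.coe_eq_zero_iff 1 (x := (z : ℝ))).2 ⟨z, by simp⟩,
        sub_zero]
    _ ≤ |V k - z| := QuotientAddGroup.norm_mk_le_norm

end NearInt

section IntForm

variable {γ : Type*} [Fintype γ]

def intDot (c : γ → ℤ) (x : γ → ℝ) : ℝ := ∑ i, (c i : ℝ) * x i

theorem intDot_add_smul (c : γ → ℤ) (x u : γ → ℝ) (a : ℝ) :
    intDot c (x + a • u) = intDot c x + a * intDot c u := by
  simp only [intDot, Pi.add_apply, Pi.smul_apply, smul_eq_mul, Finset.mul_sum,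
    ← Finset.sum_add_distrib]
  exact Finset.sum_congr rfl fun i _ => by ring

theorem intDot_sub (c c' : γ → ℤ) (x : γ → ℝ) : intDot (c - c') x = intDot c x - intDot c' x := by
  simp only [intDot, Pi.sub_apply, Int.cast_sub, sub_mul, Finset.sum_sub_distrib]

theorem intDot_zsmul (p : ℤ) (c : γ → ℤ) (x : γ → ℝ) : intDot (p • c) x = p * intDot c x := by
  simp only [intDot, Pi.smul_apply, smul_eq_mul, Int.cast_mul, mul_assoc, Finset.mul_sum]

theorem continuous_intDot (c : γ → ℤ) : Continuous (intDot c) :=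
  continuous_finsetSum _ fun i _ => continuous_const.mul (continuous_apply i)

end IntForm

section Admissible

variable {ι : Type*} {𝒰 : Ultrafilter ι} {γ : Type*} [Fintype γ]

def IsAdmissible (𝒰 : Ultrafilter ι) (w : ι → γ → ℝ) (u : γ → ℝ) : Prop :=
  ∀ c : γ → ℤ, IsNearInt 𝒰 (fun k => intDot c (w k)) → intDot c u = 0

theorem isAdmissible_of_tendsto {w : ι → γ → ℝ} {x u : γ → ℝ} (hw : Tendsto w 𝒰 (𝓝 x))
    (hu : ∀ c : γ → ℤ, (∃ z : ℤ, intDot c x = z) → intDot c u = 0) : IsAdmissible 𝒰 w u :=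
  fun c hc => hu c (hc.exists_eq_intCast_of_tendsto ((continuous_intDot c).tendsto x |>.comp hw))

theorem IsAdmissible.add_smul {w : ι → γ → ℝ} {u : γ → ℝ} {a : ι → ℝ}
    (hw : IsAdmissible 𝒰 w u) (ha : Tendsto a 𝒰 (𝓝 0)) :
    IsAdmissible 𝒰 (fun k => w k + a k • u) u := by
  intro c hc
  refine hw c ?_
  have h := hc.add_of_tendsto_zero (by simpa using ha.mul_const (-intDot c u))
  simpa [intDot_add_smul] using h

theorem IsAdmissible.exists_extend {w : ι → γ → ℝ} {u : γ → ℝ} (hw : IsAdmissible 𝒰 w u)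
    (y : ι → ℝ) : ∃ s : ℝ, ∀ (c : γ → ℤ) (b : ℤ),
      IsNearInt 𝒰 (fun k => intDot c (w k) + b * y k) → intDot c u + b * s = 0 := by
  by_cases hy : ∃ (c₀ : γ → ℤ) (b₀ : ℤ), b₀ ≠ 0 ∧ IsNearInt 𝒰 (fun k => intDot c₀ (w k) + b₀ * y k)
  · obtain ⟨c₀, b₀, hb₀, hc₀⟩ := hy
    refine ⟨-intDot c₀ u / b₀, fun c b hc => ?_⟩
    -- eliminating `y` between the two relations leaves a relation among the coordinates of `w`
    have h := hw (b₀ • c - b • c₀) (by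
      convert hc.int_mul_sub_int_mul hc₀ b₀ b using 2
      simp only [intDot_sub, intDot_zsmul]
      ring)
    rw [intDot_sub, intDot_zsmul, intDot_zsmul] at h
    have hb₀' : (b₀ : ℝ) ≠ 0 := Int.cast_ne_zero.2 hb₀
    field_simp
    linear_combination h
  · push Not at hy
    refine ⟨0, fun c b hc => ?_⟩
    obtain rfl : b = 0 := by_contra fun hb => hy c b hb hc
    simpa using hw c (by simpa using hc)

end Admissible

section Coordinates

variable {α β R M : Type*} [Add M] [SMul R M] {ℓ : ℕ}

theorem Sum.elim_add_smul (v uv : α → M) (xs uxs : β → M) (a : R) :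
    Sum.elim (v + a • uv) (xs + a • uxs) = Sum.elim v xs + a • Sum.elim uv uxs := by
  ext (i | j) <;> rfl

theorem Fin.snoc_add_smul (xs uxs : Fin ℓ → M) (t s : M) (a : R) :
    (Fin.snoc xs t : Fin (ℓ + 1) → M) + a • Fin.snoc uxs s =
      Fin.snoc (xs + a • uxs) (t + a • s) := by
  ext j
  rcases Fin.eq_castSucc_or_eq_last j with ⟨i, rfl⟩ | rfl <;> simp

variable [Fintype α]

theorem intDot_elim_snoc (c : α ⊕ Fin (ℓ + 1) → ℤ) (v : α → ℝ) (xs : Fin ℓ → ℝ) (t : ℝ) :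
    intDot c (Sum.elim v (Fin.snoc xs t)) =
      intDot (c ∘ Sum.map id Fin.castSucc) (Sum.elim v xs) + c (.inr (Fin.last ℓ)) * t := by
  simp only [intDot, Fintype.sum_sum_type, Fin.sum_univ_castSucc, Function.comp_apply,
    Sum.map_inl, Sum.map_inr, id, Sum.elim_inl, Sum.elim_inr, Fin.snoc_castSucc, Fin.snoc_last]
  ring

theorem intDot_elim_finZero (c : α ⊕ Fin 0 → ℤ) (v : α → ℝ) (xs : Fin 0 → ℝ) :
    intDot c (Sum.elim v xs) = intDot (c ∘ Sum.inl) v := by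
  simp [intDot, Fintype.sum_sum_type]

variable {ι : Type*} {𝒰 : Ultrafilter ι}

theorem IsAdmissible.snoc {v : ι → α → ℝ} {xs : ι → Fin ℓ → ℝ} {uv : α → ℝ} {uxs : Fin ℓ → ℝ}
    (hw : IsAdmissible 𝒰 (fun k => Sum.elim (v k) (xs k)) (Sum.elim uv uxs)) (t : ι → ℝ) :
    ∃ s, IsAdmissible 𝒰 (fun k => Sum.elim (v k) (Fin.snoc (xs k) (t k)))
      (Sum.elim uv (Fin.snoc uxs s)) := by
  obtain ⟨s, hs⟩ := hw.exists_extend t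
  refine ⟨s, fun c hc => ?_⟩
  simp only [intDot_elim_snoc] at hc ⊢
  exact hs _ _ hc

end Coordinates

section Perturbation

def IsConstBetweenInts (P : ℝ → Prop) : Prop :=
  ∀ m : ℤ, ∀ r ∈ Ioo (m : ℝ) (m + 1), ∀ r' ∈ Ioo (m : ℝ) (m + 1), P r ↔ P r'

theorem IsConstBetweenInts.of_imp_intCast {P : ℝ → Prop} (hP : ∀ r, P r → ∃ z : ℤ, r = z) :
    IsConstBetweenInts P := by
  have hgap : ∀ (m : ℤ) (r : ℝ), r ∈ Ioo (m : ℝ) (m + 1) → ¬P r := by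
    rintro m r ⟨hm, hm'⟩ hr
    obtain ⟨z, rfl⟩ := hP r hr
    norm_cast at hm hm'
    omega
  exact fun m r hr r' hr' => iff_of_false (hgap m r hr) (hgap m r' hr')

theorem isConstBetweenInts_pos : IsConstBetweenInts (0 < ·) := by
  rintro m r ⟨hr, hr'⟩ r' ⟨hr'', hr'''⟩
  rcases le_or_gt 0 m with hm | hm
  · have : (0 : ℝ) ≤ m := by exact_mod_cast hm
    exact iff_of_true (by linarith) (by linarith)
  · have : (m : ℝ) + 1 ≤ 0 := by exact_mod_cast hm
    exact iff_of_false (by linarith) (by linarith)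

variable {ι : Type*} {𝒰 : Ultrafilter ι} {γ : Type*} [Fintype γ]

theorem IsAdmissible.eventually_intDot_add_smul_iff {w : ι → γ → ℝ} {u : γ → ℝ} {a : ι → ℝ}
    (hw : IsAdmissible 𝒰 w u) (ha : Tendsto a 𝒰 (𝓝 0)) (e : γ → ℤ) {P : ℝ → Prop}
    (hP : IsConstBetweenInts P) :
    ∀ᶠ k in 𝒰, P (intDot e (w k + a k • u)) ↔ P (intDot e (w k)) := by
  simp only [intDot_add_smul]
  by_cases he : IsNearInt 𝒰 (fun k => intDot e (w k))
  · simp [hw e he]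
  obtain ⟨ε, hε, hfar⟩ := exists_eventually_le_abs_sub_intCast he
  have hsmall : ∀ᶠ k in 𝒰, |a k * intDot e u| < ε := by
    have h : Tendsto (fun k => a k * intDot e u) 𝒰 (𝓝 0) := by simpa using ha.mul_const _
    exact (Metric.tendsto_nhds.1 h ε hε).mono fun k hk => by rwa [Real.dist_0_eq_abs] at hk
  filter_upwards [hfar, hsmall] with k hk hδ
  set r := intDot e (w k)
  -- `r` stays at distance `ε` from `⌊r⌋` and `⌊r⌋ + 1`, which the perturbation cannot cross
  have h₀ := hk ⌊r⌋
  have h₁ := hk (⌊r⌋ + 1)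
  have hr₀ := Int.floor_le r
  have hr₁ := Int.lt_floor_add_one r
  push_cast at h₁
  rw [abs_of_nonneg (by linarith)] at h₀
  rw [abs_of_neg (by linarith)] at h₁
  rw [abs_lt] at hδ
  exact (hP ⌊r⌋ r ⟨by linarith, hr₁⟩ _ ⟨by linarith, by linarith⟩).symm

end Perturbation

namespace FirstOrder.Language

theorem Term.exists_realize_eq_intDot {β : Type*} [Fintype β]
    (t : LsLang[[(∅ : Set ℝ)]].Term β) : ∃ e : β → ℤ, ∀ ρ, t.realize ρ = intDot e ρ := by
  classical
  induction t with
  | var i => exact ⟨Pi.single i 1, fun ρ => by simp [intDot, Pi.single_apply]⟩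
  | @func l f ts ih =>
    rcases f with f | c
    · match l, f with
      | 2, _ =>
        obtain ⟨e₀, h₀⟩ := ih 0
        obtain ⟨e₁, h₁⟩ := ih 1
        refine ⟨e₀ + e₁, fun ρ => ?_⟩
        show (ts 0).realize ρ + (ts 1).realize ρ = _
        simp only [h₀, h₁, intDot, Pi.add_apply, Int.cast_add, add_mul, Finset.sum_add_distrib]
    · match l, c with
      | 0, c => exact c.2.elim

namespace BoundedFormula

variable {ι : Type*} {𝒰 : Ultrafilter ι} {α : Type*} [Fintype α] {ℓ : ℕ}

theorem IsAtomic.exists_realize_iff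
    {φ : LsLang[[(∅ : Set ℝ)]].BoundedFormula α ℓ} (hφ : φ.IsAtomic) :
    ∃ (e : α ⊕ Fin ℓ → ℤ) (P : ℝ → Prop), IsConstBetweenInts P ∧
      ∀ v xs, φ.Realize v xs ↔ P (intDot e (Sum.elim v xs)) := by
  rcases hφ with ⟨t₁, t₂⟩ | @⟨l, R, ts⟩
  · obtain ⟨e₁, h₁⟩ := t₁.exists_realize_eq_intDot
    obtain ⟨e₂, h₂⟩ := t₂.exists_realize_eq_intDot
    refine ⟨e₁ - e₂, (· = 0), .of_imp_intCast fun r hr => ⟨0, by simpa using hr⟩, fun v xs => ?_⟩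
    simp [h₁, h₂, intDot_sub, sub_eq_zero]
  · rcases R with R | R
    · match l, R with
      | 1, _ =>
        obtain ⟨e, h⟩ := (ts 0).exists_realize_eq_intDot
        exact ⟨e, (∃ z : ℤ, · = z), .of_imp_intCast fun _ => id, fun v xs => by
          show (∃ z : ℤ, (ts 0).realize (Sum.elim v xs) = (z : ℝ)) ↔ _
          rw [h]⟩
      | 2, _ =>
        obtain ⟨e₀, h₀⟩ := (ts 0).exists_realize_eq_intDot
        obtain ⟨e₁, h₁⟩ := (ts 1).exists_realize_eq_intDot
        exact ⟨e₁ - e₀, (0 < ·), isConstBetweenInts_pos, fun v xs => by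
          show (ts 0).realize (Sum.elim v xs) < (ts 1).realize (Sum.elim v xs) ↔ _
          rw [h₀, h₁, intDot_sub]
          exact sub_pos.symm⟩
    · exact R.elim

theorem IsAtomic.eventually_realize_add_smul_iff
    {φ : LsLang[[(∅ : Set ℝ)]].BoundedFormula α ℓ} (hφ : φ.IsAtomic) {v : ι → α → ℝ}
    {xs : ι → Fin ℓ → ℝ} {uv : α → ℝ} {uxs : Fin ℓ → ℝ} {a : ι → ℝ} (ha : Tendsto a 𝒰 (𝓝 0))
    (hw : IsAdmissible 𝒰 (fun k => Sum.elim (v k) (xs k)) (Sum.elim uv uxs)) :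
    ∀ᶠ k in 𝒰, φ.Realize (v k + a k • uv) (xs k + a k • uxs) ↔ φ.Realize (v k) (xs k) := by
  obtain ⟨e, P, hP, hφ⟩ := hφ.exists_realize_iff
  simp only [hφ, Sum.elim_add_smul]
  exact hw.eventually_intDot_add_smul_iff ha e hP

theorem eventually_realize_all_of_add_smul {ψ : LsLang[[(∅ : Set ℝ)]].BoundedFormula α (ℓ + 1)}
    (ih : ∀ {v : ι → α → ℝ} {xs : ι → Fin (ℓ + 1) → ℝ} {uv : α → ℝ} {uxs : Fin (ℓ + 1) → ℝ}
      {a : ι → ℝ}, Tendsto a 𝒰 (𝓝 0) →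
      IsAdmissible 𝒰 (fun k => Sum.elim (v k) (xs k)) (Sum.elim uv uxs) →
      ∀ᶠ k in 𝒰, ψ.Realize (v k + a k • uv) (xs k + a k • uxs) ↔ ψ.Realize (v k) (xs k))
    {v : ι → α → ℝ} {xs : ι → Fin ℓ → ℝ} {uv : α → ℝ} {uxs : Fin ℓ → ℝ} {a : ι → ℝ}
    (ha : Tendsto a 𝒰 (𝓝 0))
    (hw : IsAdmissible 𝒰 (fun k => Sum.elim (v k) (xs k)) (Sum.elim uv uxs)) :
    ∀ᶠ k in 𝒰, ψ.all.Realize (v k + a k • uv) (xs k + a k • uxs) → ψ.all.Realize (v k) (xs k) := by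
  have hwit : ∀ k, ∃ t, ψ.Realize (v k) (Fin.snoc (xs k) t) → ψ.all.Realize (v k) (xs k) := by
    intro k
    by_cases h : ψ.all.Realize (v k) (xs k)
    · exact ⟨0, fun _ => h⟩
    · obtain ⟨t, ht⟩ := not_forall.1 h
      exact ⟨t, fun h' => (ht h').elim⟩
  choose t ht using hwit
  obtain ⟨s, hs⟩ := hw.snoc t
  filter_upwards [ih ha hs] with k hk hall
  refine ht k (hk.1 ?_)
  rw [Fin.snoc_add_smul]
  exact hall _

theorem eventually_realize_add_smul_iff (φ : LsLang[[(∅ : Set ℝ)]].BoundedFormula α ℓ)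
    {v : ι → α → ℝ} {xs : ι → Fin ℓ → ℝ} {uv : α → ℝ} {uxs : Fin ℓ → ℝ} {a : ι → ℝ}
    (ha : Tendsto a 𝒰 (𝓝 0))
    (hw : IsAdmissible 𝒰 (fun k => Sum.elim (v k) (xs k)) (Sum.elim uv uxs)) :
    ∀ᶠ k in 𝒰, φ.Realize (v k + a k • uv) (xs k + a k • uxs) ↔ φ.Realize (v k) (xs k) := by
  induction φ generalizing v uv a with
  | falsum => exact .of_forall fun _ => Iff.rfl
  | equal t₁ t₂ => exact (IsAtomic.equal t₁ t₂).eventually_realize_add_smul_iff ha hw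
  | rel R ts => exact (IsAtomic.rel R ts).eventually_realize_add_smul_iff ha hw
  | imp φ₁ φ₂ ih₁ ih₂ =>
    filter_upwards [ih₁ ha hw, ih₂ ha hw] with k h₁ h₂
    simp only [realize_imp, h₁, h₂]
  | all ψ ih =>
    have hw' : IsAdmissible 𝒰 (fun k => Sum.elim (v k + a k • uv) (xs k + a k • uxs))
        (Sum.elim uv uxs) := by
      simpa only [Sum.elim_add_smul] using hw.add_smul ha
    filter_upwards [eventually_realize_all_of_add_smul ih ha hw,
      eventually_realize_all_of_add_smul ih (by simpa using ha.neg) hw'] with k h₁ h₂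
    simp only [neg_smul, add_neg_cancel_right] at h₂
    exact ⟨h₁, h₂⟩

end BoundedFormula

theorem Formula.eventually_realize_add_smul_iff {ι α : Type*} [Fintype α] {𝒰 : Ultrafilter ι}
    (φ : LsLang[[(∅ : Set ℝ)]].Formula α) {v : ι → α → ℝ} {u : α → ℝ}
    {a : ι → ℝ} (ha : Tendsto a 𝒰 (𝓝 0)) (hw : IsAdmissible 𝒰 v u) :
    ∀ᶠ k in 𝒰, φ.Realize (v k + a k • u) ↔ φ.Realize (v k) := by
  have hw' : IsAdmissible 𝒰 (fun k => Sum.elim (v k) (default : Fin 0 → ℝ))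
      (Sum.elim u (default : Fin 0 → ℝ)) := by
    intro c hc
    simp only [intDot_elim_finZero] at hc ⊢
    exact hw _ hc
  filter_upwards [BoundedFormula.eventually_realize_add_smul_iff φ ha hw'] with k hk
  simpa only [Formula.boundedFormula_realize_eq_realize] using hk

end FirstOrder.Language

theorem exists_tendsto_of_not_isStratum {ι : Type} [Fintype ι] {X : Set (ι → ℝ)} {x u : ι → ℝ}
    (hu : u ≠ 0) (h : ¬IsStratum X x u) :
    ∃ (z : ℕ → ι → ℝ) (α : ℕ → ℝ), Tendsto z atTop (𝓝 x) ∧ Tendsto α atTop (𝓝 0) ∧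
      ∀ k, z k ∈ X ∧ z k + α k • u ∉ X := by
  have hseq : ∀ k : ℕ, ∃ (z : ι → ℝ) (α : ℝ), z ∈ X ∧ z + α • u ∉ X ∧
      dist z x < 1 / (k + 1) ∧ dist (z + α • u) x < 1 / (k + 1) := by
    intro k
    simp only [IsStratum, not_exists, not_and, not_forall] at h
    obtain ⟨y, hy, ⟨z, ⟨hzX, hz⟩, α, rfl⟩, hyX⟩ := h (1 / (k + 1)) Nat.one_div_pos_of_nat
    exact ⟨z, α, hzX, hyX, hz, hy⟩
  choose z α hzX hyX hz hy using hseq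
  have hlim : ∀ y : ℕ → ι → ℝ, (∀ k, dist (y k) x < 1 / (k + 1)) → Tendsto y atTop (𝓝 x) :=
    fun y hy => tendsto_iff_dist_tendsto_zero.2 <| squeeze_zero (fun _ => dist_nonneg)
      (fun k => (hy k).le) tendsto_one_div_add_atTop_nhds_zero_nat
  have hαu : Tendsto (fun k => α k • u) atTop (𝓝 0) := by
    simpa using (hlim _ hy).sub (hlim z hz)
  obtain ⟨i, hi⟩ := Function.ne_iff.1 hu
  have hα : Tendsto α atTop (𝓝 0) := by
    simpa [mul_div_cancel_right₀ _ hi] using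
      (((continuous_apply i).tendsto 0).comp hαu).div_const (u i)
  exact ⟨z, α, hlim z hz, hα, fun k => ⟨hzX k, hyX k⟩⟩

theorem LsDefinable.isStratum {n : ℕ} {X : Set (Fin n → ℝ)} (hX : LsDefinable X)
    {x u : Fin n → ℝ} (hu : ∀ c : Fin n → ℤ, (∃ z : ℤ, intDot c x = z) → intDot c u = 0) :
    IsStratum X x u := by
  rcases eq_or_ne u 0 with rfl | hu₀
  · exact ⟨1, one_pos, fun y _ ⟨z, ⟨hz, _⟩, _, hy⟩ => by simpa [hy] using hz⟩
  by_contra h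
  obtain ⟨z, α, hz, hα, hzX⟩ := exists_tendsto_of_not_isStratum hu₀ h
  obtain ⟨φ, rfl⟩ := hX
  have hle : (Ultrafilter.of (atTop : Filter ℕ) : Filter ℕ) ≤ atTop := Ultrafilter.of_le _
  obtain ⟨k, hk⟩ := (φ.eventually_realize_add_smul_iff (hα.mono_left hle)
    (isAdmissible_of_tendsto (hz.mono_left hle) hu)).exists
  exact (hzX k).2 (hk.2 (hzX k).1)

theorem exists_ne_zero_forall_intDot_eq_zero {γ : Type*} [Fintype γ] {x : γ → ℝ} {i : γ}
    (hi : ∀ q : ℚ, x i ≠ q) :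
    ∃ u ≠ 0, ∀ c : γ → ℤ, (∃ z : ℤ, intDot c x = z) → intDot c u = 0 := by
  -- a `ℚ`-linear form on `ℝ` that kills `1` but not `x i`
  have hx : x i ∉ ℚ ∙ (1 : ℝ) := by
    rw [Submodule.mem_span_singleton]
    rintro ⟨q, hq⟩
    exact hi q (by simpa [Rat.smul_def] using hq.symm)
  obtain ⟨f, hfx, hf⟩ := Submodule.exists_dual_map_eq_bot_of_notMem hx inferInstance
  have hf₁ : f 1 = 0 := by
    simpa [hf] using Submodule.mem_map_of_mem (f := f) (Submodule.mem_span_singleton_self (1 : ℝ))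
  refine ⟨fun j => (f (x j) : ℝ), fun h => hfx (by simpa using congrFun h i), ?_⟩
  rintro c ⟨z, hz⟩
  have h : f (intDot c x) = ∑ j, c j * f (x j) := by
    simp [intDot, ← zsmul_eq_mul, map_zsmul]
  rw [hz, ← mul_one (z : ℝ), ← zsmul_eq_mul, map_zsmul, hf₁, smul_zero] at h
  simpa [intDot] using congrArg ((↑) : ℚ → ℝ) h.symm

/-- A `⟨ℝ,+,<,ℤ⟩`-definable set has countably many singular points, all with rational
coordinates. -/
theorem stmt10 (n : ℕ) (X : Set (Fin n → ℝ)) (hX : LsDefinable X) :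
    {x | IsSingular X x}.Countable ∧
    ∀ x : Fin n → ℝ, IsSingular X x → ∀ i, ∃ q : ℚ, x i = (q : ℝ) := by
  have hrat : ∀ x : Fin n → ℝ, IsSingular X x → ∀ i, ∃ q : ℚ, x i = (q : ℝ) := by
    intro x hx i
    by_contra! hi
    obtain ⟨u, hu, hux⟩ := exists_ne_zero_forall_intDot_eq_zero hi
    exact hu (hx u (hX.isStratum hux))
  refine ⟨(Set.countable_pi fun _ => Set.countable_range ((↑) : ℚ → ℝ)).mono ?_, hrat⟩
  intro x hx i
  obtain ⟨q, hq⟩ := hrat x hx i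
  exact ⟨q, hq.symm⟩
end

section
/- Let X ⊆ ℝ^n be ⟨ℝ,+,<,ℤ⟩-definable and let x ∈ ℝ^n. Then x is X-singular if and only if for every r > 0 there exists s > 0 such that for every nonzero vector v ∈ ℝ^n with |v| < s there exist points y, z ∈ B(x,r) with y = z + v and (y ∈ X ⟺ z ∉ X). -/
open FirstOrder

/-!
Definable sets of `⟨ℝ,+,<,ℤ⟩` admit a weak quantifier elimination: membership depends only on the
integer part of a point and on the signs of finitely many affine forms at its fractional part.
Terms are integer linear forms, so atomic formulas have this shape, and an existential quantifier
is removed by Fourier–Motzkin elimination. Consequently such a set is locally conic at every `x`: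
on a small ball, membership is decided by the signs of finitely many linear forms at `y - x`.

If `x` is singular and `v` is small, some translation by `v` must change membership near `x`.
Otherwise membership along a line `z + ℝ v` is `1`-periodic on a long segment, while the conic
structure allows it to change at most once per linear form; so it is constant along the line,
and `v` is a stratum.
-/

open Filter Topology Metric Finset FirstOrder FirstOrder.Language
open SignType (sign)

lemma exists_sign_sub_eq_sign_sub {κ : Type*} (P : Finset κ) (β β' : κ → ℝ)
    (h : ∀ p ∈ P, ∀ q ∈ P, sign (β p - β q) = sign (β' p - β' q)) (f : ℝ) :
    ∃ f', ∀ p ∈ P, sign (f' - β' p) = sign (f - β p) := by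
  by_cases hroot : ∃ p₀ ∈ P, β p₀ = f
  · obtain ⟨p₀, hp₀, rfl⟩ := hroot
    exact ⟨β' p₀, fun p hp => (h p₀ hp₀ p hp).symm⟩
  push Not at hroot
  obtain ⟨f', hlo, hhi⟩ := Finset.exists_between' ((P.filter (β · < f)).image β')
    ((P.filter (f < β ·)).image β') (by
      simp only [mem_image, mem_filter]
      rintro _ ⟨p, ⟨hp, hpf⟩, rfl⟩ _ ⟨q, ⟨hq, hfq⟩, rfl⟩
      rw [← sub_neg, ← sign_eq_neg_one_iff, ← h p hp q hq, sign_eq_neg_one_iff]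
      linarith)
  refine ⟨f', fun p hp => ?_⟩
  rcases (hroot p hp).lt_or_gt with hpf | hfp
  · rw [sign_pos (sub_pos.2 (hlo _ (mem_image_of_mem _ (mem_filter.2 ⟨hp, hpf⟩)))),
      sign_pos (sub_pos.2 hpf)]
  · rw [sign_neg (sub_neg.2 (hhi _ (mem_image_of_mem _ (mem_filter.2 ⟨hp, hfp⟩)))),
      sign_neg (sub_neg.2 hfp)]

section FractSemilinear

variable {ι κ : Type*} [Fintype ι] [Fintype κ]

def SignsAgree (H : Finset ((ι → ℝ) × ℝ)) (u u' : ι → ℝ) : Prop :=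
  ∀ p ∈ H, sign (p.1 ⬝ᵥ u - p.2) = sign (p.1 ⬝ᵥ u' - p.2)

lemma SignsAgree.symm {H : Finset ((ι → ℝ) × ℝ)} {u u' : ι → ℝ} (h : SignsAgree H u u') :
    SignsAgree H u' u :=
  fun p hp => (h p hp).symm

lemma SignsAgree.mono {H H' : Finset ((ι → ℝ) × ℝ)} {u u' : ι → ℝ} (h : SignsAgree H' u u')
    (hH : H ⊆ H') : SignsAgree H u u' :=
  fun p hp => h p (hH hp)

def IsFractSemilinear (X : Set (ι → ℝ)) : Prop :=
  ∃ H : Finset ((ι → ℝ) × ℝ), ∀ y z : ι → ℝ, (∀ i, ⌊y i⌋ = ⌊z i⌋) →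
    SignsAgree H (Int.fract ∘ y) (Int.fract ∘ z) → (y ∈ X ↔ z ∈ X)

namespace IsFractSemilinear

lemma compl {X : Set (ι → ℝ)} (hX : IsFractSemilinear X) : IsFractSemilinear Xᶜ := by
  obtain ⟨H, hH⟩ := hX
  exact ⟨H, fun y z hfl hs => not_congr (hH y z hfl hs)⟩

lemma imp {X Y : Set (ι → ℝ)} (hX : IsFractSemilinear X) (hY : IsFractSemilinear Y) :
    IsFractSemilinear {w | w ∈ X → w ∈ Y} := by
  obtain ⟨H₁, h₁⟩ := hX
  obtain ⟨H₂, h₂⟩ := hY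
  exact ⟨H₁ ∪ H₂, fun y z hfl hs => imp_congr (h₁ y z hfl (hs.mono subset_union_left))
    (h₂ y z hfl (hs.mono subset_union_right))⟩

lemma comp_equiv {X : Set (κ → ℝ)} (hX : IsFractSemilinear X) (e : κ ≃ ι) :
    IsFractSemilinear {w : ι → ℝ | w ∘ e ∈ X} := by
  obtain ⟨H, hH⟩ := hX
  refine ⟨H.image fun p => (p.1 ∘ e.symm, p.2), fun y z hfl hs => hH _ _ (fun k => hfl (e k)) ?_⟩
  intro p hp
  have := hs _ (mem_image_of_mem _ hp)
  rwa [comp_equiv_symm_dotProduct, comp_equiv_symm_dotProduct] at this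

end IsFractSemilinear

noncomputable def intLevels (c : ι → ℤ) : Finset ((ι → ℝ) × ℝ) :=
  (Icc (-∑ i, |c i|) (∑ i, |c i|)).image fun μ : ℤ => (Int.cast ∘ c, (μ : ℝ))

lemma abs_intCast_dotProduct_fract_le (c : ι → ℤ) (w : ι → ℝ) :
    |(Int.cast ∘ c) ⬝ᵥ (Int.fract ∘ w)| ≤ ((∑ i, |c i| : ℤ) : ℝ) := by
  push_cast
  refine (abs_sum_le_sum_abs _ _).trans (sum_le_sum fun i _ => ?_)
  rw [Function.comp_apply, Function.comp_apply, abs_mul, abs_of_nonneg (Int.fract_nonneg (w i))]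
  exact mul_le_of_le_one_right (abs_nonneg _) (Int.fract_lt_one _).le

lemma sign_sub_eq_of_abs_le_of_lt {t t' μ M : ℝ} (ht : |t| ≤ M) (ht' : |t'| ≤ M) (hμ : M < |μ|) :
    sign (t - μ) = sign (t' - μ) := by
  rw [abs_le] at ht ht'
  rcases le_or_gt 0 μ with h | h
  · rw [abs_of_nonneg h] at hμ
    rw [sign_neg (by linarith), sign_neg (by linarith)]
  · rw [abs_of_neg h] at hμ
    rw [sign_pos (by linarith), sign_pos (by linarith)]

lemma sign_intCast_dotProduct_sub_eq (c : ι → ℤ) {y z : ι → ℝ} (hfl : ∀ i, ⌊y i⌋ = ⌊z i⌋)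
    (hs : SignsAgree (intLevels c) (Int.fract ∘ y) (Int.fract ∘ z)) (κ : ℤ) :
    sign ((Int.cast ∘ c) ⬝ᵥ y - κ) = sign ((Int.cast ∘ c) ⬝ᵥ z - κ) := by
  have hsplit : ∀ w : ι → ℝ, (Int.cast ∘ c) ⬝ᵥ w - κ =
      (Int.cast ∘ c) ⬝ᵥ (Int.fract ∘ w) - ((κ - ∑ i, c i * ⌊w i⌋ : ℤ) : ℝ) := by
    intro w
    simp only [dotProduct, Function.comp_apply, Int.fract]
    push_cast
    simp only [mul_sub, sum_sub_distrib]
    ring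
  rw [hsplit, hsplit z, ← Finset.sum_congr rfl fun i _ => congrArg (c i * ·) (hfl i)]
  by_cases hμ : |κ - ∑ i, c i * ⌊y i⌋| ≤ ∑ i, |c i|
  · exact hs _ (mem_image_of_mem _ (mem_Icc.2 (abs_le.1 hμ)))
  · exact sign_sub_eq_of_abs_le_of_lt (abs_intCast_dotProduct_fract_le c y)
      (abs_intCast_dotProduct_fract_le c z) (by exact_mod_cast not_le.1 hμ)

lemma isFractSemilinear_setOf_intCast_dotProduct (c : ι → ℤ) (P : (ℤ → SignType) → Prop) :
    IsFractSemilinear {w : ι → ℝ | P fun κ : ℤ => sign ((Int.cast ∘ c) ⬝ᵥ w - κ)} :=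
  ⟨intLevels c, fun _ _ hfl hs =>
    Iff.of_eq (congrArg P (funext (sign_intCast_dotProduct_sub_eq c hfl hs)))⟩

lemma dotProduct_sumElim_const (a : ι ⊕ Unit → ℝ) (u : ι → ℝ) (f : ℝ) :
    a ⬝ᵥ Sum.elim u (fun _ => f) = (a ∘ Sum.inl) ⬝ᵥ u + a (.inr ()) * f := by
  simp [dotProduct, Fintype.sum_sum_type]

/-- Fourier–Motzkin elimination of the last variable. -/
noncomputable def fmResolvent (G : Finset ((ι ⊕ Unit → ℝ) × ℝ)) : Finset ((ι → ℝ) × ℝ) :=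
  G.image (fun p => (p.1 ∘ Sum.inl, p.2)) ∪
    (G ×ˢ G).image fun pq =>
      (pq.1.1 (.inr ()) • (pq.2.1 ∘ Sum.inl) - pq.2.1 (.inr ()) • (pq.1.1 ∘ Sum.inl),
        pq.1.1 (.inr ()) * pq.2.2 - pq.2.1 (.inr ()) * pq.1.2)

lemma SignsAgree.exists_sumElim {G : Finset ((ι ⊕ Unit → ℝ) × ℝ)} {u u' : ι → ℝ}
    (h : SignsAgree (fmResolvent G) u u') (f : ℝ) :
    ∃ f', SignsAgree G (Sum.elim u fun _ => f) (Sum.elim u' fun _ => f') := by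
  -- the value of the last variable at which the form `p` vanishes
  set root : (ι ⊕ Unit → ℝ) × ℝ → (ι → ℝ) → ℝ :=
    fun p w => -((p.1 ∘ Sum.inl) ⬝ᵥ w - p.2) / p.1 (.inr ())
  have hroot : ∀ p : (ι ⊕ Unit → ℝ) × ℝ, p.1 (.inr ()) ≠ 0 → ∀ w g,
      p.1 ⬝ᵥ Sum.elim w (fun _ => g) - p.2 = p.1 (.inr ()) * (g - root p w) := by
    intro p hp w g
    simp only [root, dotProduct_sumElim_const]
    field_simp
    ring
  have hpairs : ∀ p ∈ G.filter (·.1 (.inr ()) ≠ 0), ∀ q ∈ G.filter (·.1 (.inr ()) ≠ 0),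
      sign (root p u - root q u) = sign (root p u' - root q u') := by
    simp only [mem_filter]
    rintro p ⟨hp, hkp⟩ q ⟨hq, hkq⟩
    have hR : ∀ w, (p.1 (.inr ()) • (q.1 ∘ Sum.inl) - q.1 (.inr ()) • (p.1 ∘ Sum.inl)) ⬝ᵥ w -
        (p.1 (.inr ()) * q.2 - q.1 (.inr ()) * p.2) =
        p.1 (.inr ()) * q.1 (.inr ()) * (root p w - root q w) := by
      intro w
      simp only [root, sub_dotProduct, smul_dotProduct, smul_eq_mul]
      field_simp
      ring
    have := h _ (mem_union_right _ (mem_image_of_mem _ (mem_product.2 ⟨hp, hq⟩ : (p, q) ∈ G ×ˢ G)))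
    rw [hR, hR, sign_mul _ (root p u - _), sign_mul _ (root p u' - _)] at this
    exact mul_left_cancel₀ (by simp [hkp, hkq]) this
  obtain ⟨f', hf'⟩ := exists_sign_sub_eq_sign_sub _ (root · u) (root · u') hpairs f
  refine ⟨f', fun p hp => ?_⟩
  by_cases hk : p.1 (.inr ()) = 0
  · simp only [dotProduct_sumElim_const, hk, zero_mul, add_zero]
    exact h _ (mem_union_left _ (mem_image_of_mem _ hp))
  · rw [hroot p hk, hroot p hk, sign_mul, sign_mul, hf' p (mem_filter.2 ⟨hp, hk⟩)]

lemma IsFractSemilinear.exists_sumElim {X : Set (ι ⊕ Unit → ℝ)} (hX : IsFractSemilinear X) :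
    IsFractSemilinear {y : ι → ℝ | ∃ t, Sum.elim y (fun _ => t) ∈ X} := by
  classical
  obtain ⟨H, hH⟩ := hX
  set e : ι ⊕ Unit → ℝ := Pi.single (.inr ()) 1
  have he : ∀ (w : ι → ℝ) g, e ⬝ᵥ Sum.elim w (fun _ => g) = g := by
    simp [e]
  -- the forms `g - 0` and `g - 1` in the last variable keep it in `[0, 1)`
  set G := insert (e, 0) (insert (e, 1) H)
  suffices key : ∀ y z : ι → ℝ, (∀ i, ⌊y i⌋ = ⌊z i⌋) →
      SignsAgree (fmResolvent G) (Int.fract ∘ y) (Int.fract ∘ z) →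
      (∃ t, Sum.elim y (fun _ => t) ∈ X) → ∃ t, Sum.elim z (fun _ => t) ∈ X from
    ⟨fmResolvent G, fun y z hfl hs => ⟨key y z hfl hs, key z y (fun i => (hfl i).symm) hs.symm⟩⟩
  rintro y z hfl hs ⟨t, ht⟩
  obtain ⟨f', hf'⟩ := hs.exists_sumElim (Int.fract t)
  have h0 : 0 ≤ f' := by
    have := hf' (e, 0) (mem_insert_self _ _)
    rw [he, he, sub_zero, sub_zero] at this
    rw [← sign_nonneg_iff, ← this, sign_nonneg_iff]
    exact Int.fract_nonneg t
  have h1 : f' < 1 := by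
    have := hf' (e, 1) (mem_insert_of_mem (mem_insert_self _ _))
    rw [he, he] at this
    rw [← sub_neg, ← sign_eq_neg_one_iff, ← this, sign_eq_neg_one_iff, sub_neg]
    exact Int.fract_lt_one t
  refine ⟨⌊t⌋ + f', (hH _ _ ?_ ?_).1 ht⟩
  · rintro (i | _)
    · exact hfl i
    · simp [Int.floor_eq_zero_iff.2 ⟨h0, h1⟩]
  · have hfract : Int.fract ∘ (fun _ : Unit => ⌊t⌋ + f') = fun _ => f' := by
      funext
      rw [Function.comp_apply, Int.fract_intCast_add, Int.fract_eq_self.2 ⟨h0, h1⟩]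
    rw [Sum.comp_elim, Sum.comp_elim, hfract]
    exact hf'.mono ((subset_insert _ _).trans (subset_insert _ _))

end FractSemilinear

lemma exists_realize_eq_intCast_dotProduct {γ : Type*} [Fintype γ]
    (t : LsLang[[(∅ : Set ℝ)]].Term γ) :
    ∃ c : γ → ℤ, ∀ v : γ → ℝ, t.realize v = (Int.cast ∘ c) ⬝ᵥ v := by
  classical
  induction t with
  | var i => exact ⟨Pi.single i 1, fun v => by simp [dotProduct, Pi.single_apply]⟩
  | @func k f ts ih =>
    rcases f with f | c
    · rcases k with _ | _ | _ | k
      · cases f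
      · cases f
      · obtain ⟨c₀, h₀⟩ := ih 0
        obtain ⟨c₁, h₁⟩ := ih 1
        refine ⟨c₀ + c₁, fun v => ?_⟩
        change (ts 0).realize v + (ts 1).realize v = _
        simp [h₀, h₁, dotProduct, add_mul, sum_add_distrib]
      · cases f
    · rcases k with _ | k
      · exact (Set.notMem_empty _ c.2).elim
      · cases c

lemma IsFractSemilinear.forall_snoc {α : Type*} [Fintype α] {l : ℕ}
    {X : Set (α ⊕ Fin (l + 1) → ℝ)} (hX : IsFractSemilinear X) :
    IsFractSemilinear
      {w : α ⊕ Fin l → ℝ | ∀ t, Sum.elim (w ∘ Sum.inl) (Fin.snoc (w ∘ Sum.inr) t) ∈ X} := by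
  let e : α ⊕ Fin (l + 1) ≃ (α ⊕ Fin l) ⊕ Unit :=
    (Equiv.sumCongr (Equiv.refl α)
      (finSumFinEquiv.symm.trans (Equiv.sumCongr (Equiv.refl _) finOneEquiv))).trans
      (Equiv.sumAssoc _ _ _).symm
  have he : ∀ (w : α ⊕ Fin l → ℝ) t,
      Sum.elim w (fun _ => t) ∘ e = Sum.elim (w ∘ Sum.inl) (Fin.snoc (w ∘ Sum.inr) t) := by
    intro w t
    ext (a | j)
    · rfl
    · refine Fin.lastCases ?_ (fun j => ?_) j
      · simp [e, finSumFinEquiv_symm_last]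
      · simp [e, finSumFinEquiv_symm_apply_castSucc]
  convert (hX.compl.comp_equiv e).exists_sumElim.compl using 1
  ext w
  simp only [Set.mem_ofPred_eq, Set.mem_compl_iff, not_exists, not_not, he]

lemma isFractSemilinear_realize {α : Type*} [Fintype α] {l : ℕ}
    (φ : LsLang[[(∅ : Set ℝ)]].BoundedFormula α l) :
    IsFractSemilinear {w : α ⊕ Fin l → ℝ | φ.Realize (w ∘ Sum.inl) (w ∘ Sum.inr)} := by
  induction φ with
  | falsum => exact ⟨∅, fun _ _ _ _ => Iff.rfl⟩
  | equal t₁ t₂ =>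
    obtain ⟨c₁, h₁⟩ := exists_realize_eq_intCast_dotProduct t₁
    obtain ⟨c₂, h₂⟩ := exists_realize_eq_intCast_dotProduct t₂
    convert isFractSemilinear_setOf_intCast_dotProduct (c₁ - c₂) (· 0 = 0) using 1
    ext w
    simp [BoundedFormula.Realize, h₁, h₂, dotProduct, sub_mul, sub_eq_zero]
  | @rel l k R ts =>
    rcases R with R | R
    · rcases k with _ | _ | _ | k
      · cases R
      · obtain ⟨c, h⟩ := exists_realize_eq_intCast_dotProduct (ts 0)
        convert isFractSemilinear_setOf_intCast_dotProduct c (∃ κ, · κ = 0) using 1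
        ext w
        change (∃ κ : ℤ, (ts 0).realize (Sum.elim (w ∘ Sum.inl) (w ∘ Sum.inr)) = (κ : ℝ)) ↔ _
        simp [h, sub_eq_zero]
      · obtain ⟨c₀, h₀⟩ := exists_realize_eq_intCast_dotProduct (ts 0)
        obtain ⟨c₁, h₁⟩ := exists_realize_eq_intCast_dotProduct (ts 1)
        convert isFractSemilinear_setOf_intCast_dotProduct (c₀ - c₁) (· 0 = -1) using 1
        ext w
        change (ts 0).realize (Sum.elim (w ∘ Sum.inl) (w ∘ Sum.inr)) <
          (ts 1).realize (Sum.elim (w ∘ Sum.inl) (w ∘ Sum.inr)) ↔ _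
        simp [h₀, h₁, sign_eq_neg_one_iff, dotProduct, sub_mul]
      · cases R
    · cases k <;> cases R
  | imp φ ψ ihφ ihψ => exact ihφ.imp ihψ
  | all φ ih =>
    convert ih.forall_snoc using 1
    ext w
    simp only [Set.mem_ofPred_eq, BoundedFormula.realize_all, Sum.elim_comp_inl,
      Sum.elim_comp_inr]

lemma LsDefinable.isFractSemilinear {n : ℕ} {X : Set (Fin n → ℝ)} (hX : LsDefinable X) :
    IsFractSemilinear X := by
  obtain ⟨φ, rfl⟩ := hX
  convert (isFractSemilinear_realize φ).comp_equiv (Equiv.sumEmpty (Fin n) (Fin 0)) using 1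
  ext v
  simp only [Set.mem_ofPred_eq, Formula.Realize]
  exact iff_of_eq (congrArg (BoundedFormula.Realize φ v) (Subsingleton.elim _ _))

section Periodic

variable {S : Set ℝ} {T : ℝ}

lemma mem_add_natCast_iff_of_periodic (hper : ∀ t, |t| ≤ T → |t + 1| ≤ T → (t + 1 ∈ S ↔ t ∈ S))
    (k : ℕ) {t : ℝ} (ht : |t| ≤ T) (htk : |t + k| ≤ T) : t + k ∈ S ↔ t ∈ S := by
  induction k with
  | zero => simp
  | succ k ih =>
    rw [abs_le] at ht htk
    push_cast at htk ⊢
    have hk : |t + k| ≤ T := abs_le.2 ⟨by linarith [k.cast_nonneg (α := ℝ)], by linarith⟩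
    rw [← add_assoc, hper _ hk (by rw [add_assoc]; exact abs_le.2 htk), ih hk]

lemma mem_add_intCast_iff_of_periodic (hper : ∀ t, |t| ≤ T → |t + 1| ≤ T → (t + 1 ∈ S ↔ t ∈ S))
    (m : ℤ) {t : ℝ} (ht : |t| ≤ T) (htm : |t + m| ≤ T) : t + m ∈ S ↔ t ∈ S := by
  obtain ⟨k, rfl | rfl⟩ := Int.eq_nat_or_neg m
  · exact_mod_cast mem_add_natCast_iff_of_periodic hper k ht htm
  · push_cast at htm ⊢
    have := mem_add_natCast_iff_of_periodic hper k htm (by simpa using ht)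
    rw [← sub_eq_add_neg, sub_add_cancel] at this
    exact this.symm

lemma sign_eq_of_abs_sub_lt {a b : ℝ} (h : |b - a| < |a|) : sign b = sign a := by
  rw [abs_sub_lt_iff] at h
  rcases lt_trichotomy a 0 with ha | rfl | ha
  · rw [abs_of_neg ha] at h
    rw [sign_neg ha, sign_neg (by linarith)]
  · simp at h; linarith [abs_nonneg b]
  · rw [abs_of_pos ha] at h
    rw [sign_pos ha, sign_pos (by linarith)]

/-- An affine function has at most one sign change. -/
lemma abs_sub_le_of_sign_ne {A g s s' β : ℝ} (hβ : 0 ≤ β)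
    (h : sign (A + s * g) ≠ sign (A + (s + β) * g))
    (h' : sign (A + s' * g) ≠ sign (A + (s' + β) * g)) :
    |s - s'| ≤ 2 * β := by
  have hle : ∀ s, sign (A + s * g) ≠ sign (A + (s + β) * g) →
      |A + s * g| ≤ β * |g| := fun s hs => by
    by_contra hlt
    refine hs (sign_eq_of_abs_sub_lt ?_).symm
    rw [show A + (s + β) * g - (A + s * g) = β * g by ring, abs_mul, abs_of_nonneg hβ]
    exact not_le.1 hlt
  have hg : 0 < |g| := abs_pos.2 fun hg => h (by simp [hg])
  have := abs_sub_le (A + s * g) 0 (A + s' * g)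
  rw [sub_zero, zero_sub, abs_neg, show A + s * g - (A + s' * g) = (s - s') * g by ring,
    abs_mul] at this
  nlinarith [hle s h, hle s' h']

lemma exists_forall_sign_eq {κ : Type*} (J : Finset κ) (A g : κ → ℝ) (s : ℝ) {β : ℝ}
    (hβ₀ : 0 ≤ β) (hβ₁ : β < 1) : ∃ i : Fin (J.card + 1), ∀ a ∈ J,
      sign (A a + (s + 2 * i) * g a) = sign (A a + (s + 2 * i + β) * g a) := by
  by_contra! hne
  choose a ha hne using hne
  obtain ⟨i, -, i', -, hii', heq⟩ := exists_ne_map_eq_of_card_lt_of_maps_to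
    (by simp : J.card < (univ : Finset (Fin (J.card + 1))).card) fun i _ => ha i
  have := abs_sub_le_of_sign_ne hβ₀ (hne i) (heq ▸ hne i')
  rw [show s + 2 * i - (s + 2 * i') = 2 * (i - i') by ring, abs_mul, abs_two] at this
  have : |((i : ℤ) - i' : ℤ)| < 1 := by
    have : |(i : ℝ) - i'| < 1 := by linarith
    exact_mod_cast this
  rw [abs_lt] at this
  exact hii' (Fin.ext (by omega))

lemma mem_of_periodic_of_sign_determined {κ : Type*} (J : Finset κ) (A g : κ → ℝ)
    (hper : ∀ t, |t| ≤ T → |t + 1| ≤ T → (t + 1 ∈ S ↔ t ∈ S))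
    (hsign : ∀ t t', |t| ≤ T → |t'| ≤ T →
      (∀ a ∈ J, sign (A a + t * g a) = sign (A a + t' * g a)) → (t ∈ S ↔ t' ∈ S))
    {α : ℝ} (hα : |α| + 2 * J.card + 1 ≤ T) (h0 : 0 ∈ S) : α ∈ S := by
  have hT : ∀ t, -(|α| + 1) ≤ t → t ≤ |α| + 2 * J.card → |t| ≤ T :=
    fun t h₁ h₂ => abs_le.2 ⟨by linarith, by linarith⟩
  have := neg_abs_le α
  have := le_abs_self α
  have := Int.floor_le α
  have := Int.lt_floor_add_one α
  -- on one of the segments `[⌊α⌋ + 2i, α + 2i]` no form changes sign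
  obtain ⟨i, hi⟩ := exists_forall_sign_eq J A g ⌊α⌋ (Int.fract_nonneg α) (Int.fract_lt_one α)
  have hiJ : (i : ℝ) ≤ J.card := by exact_mod_cast Nat.lt_succ_iff.1 i.2
  rw [add_assoc, add_comm (2 * (i : ℝ)), ← add_assoc, Int.floor_add_fract] at hi
  have hfloor : (⌊α⌋ : ℝ) ∈ S := by
    simpa using (mem_add_intCast_iff_of_periodic hper ⌊α⌋ (t := 0) (by simp; linarith)
      (by simp; exact abs_le.2 ⟨by linarith, by linarith⟩)).2 h0
  have hfloor_add : (⌊α⌋ : ℝ) + 2 * i ∈ S := by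
    have := mem_add_natCast_iff_of_periodic hper (2 * i) (t := ⌊α⌋) (hT _ (by linarith)
      (by linarith)) (hT _ (by push_cast; linarith) (by push_cast; linarith))
    push_cast at this
    exact this.2 hfloor
  have hα_add : α + 2 * i ∈ S :=
    (hsign _ _ (hT _ (by linarith) (by linarith)) (hT _ (by linarith) (by linarith)) hi).1
      hfloor_add
  have := mem_add_natCast_iff_of_periodic hper (2 * i) (t := α) (hT _ (by linarith)
    (by linarith)) (hT _ (by push_cast; linarith) (by push_cast; linarith))
  push_cast at this
  exact this.1 hα_add

end Periodic

section Conic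

variable {ι : Type} [Fintype ι]

def IsLocallyConicAt (X : Set (ι → ℝ)) (x : ι → ℝ) : Prop :=
  ∃ U ∈ 𝓝 x, ∃ J : Finset (ι → ℝ), ∀ y ∈ U, ∀ z ∈ U,
    (∀ a ∈ J, sign (a ⬝ᵥ (y - x)) = sign (a ⬝ᵥ (z - x))) → (y ∈ X ↔ z ∈ X)

lemma eventually_floor_eq (a : ℝ) : ∀ᶠ b in 𝓝 a, ⌊b⌋ = if a ≤ b then ⌊a⌋ else ⌈a⌉ - 1 := by
  filter_upwards [eventually_lt_nhds (Int.lt_floor_add_one a),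
    eventually_gt_nhds (show ((⌈a⌉ - 1 : ℤ) : ℝ) < a by
      push_cast; linarith [Int.ceil_lt_add_one a])]
    with b hb₁ hb₂
  split_ifs with hab
  · exact Int.floor_eq_iff.2 ⟨(Int.floor_le a).trans hab, hb₁⟩
  · exact Int.floor_eq_iff.2 ⟨hb₂.le, by push_cast; linarith [Int.le_ceil a]⟩

lemma eventually_sign_eq {E : Type*} [TopologicalSpace E] {f : E → ℝ} {x : E}
    (hf : ContinuousAt f x) (hx : f x ≠ 0) :
    ∀ᶠ y in 𝓝 x, sign (f y) = sign (f x) :=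
  ((continuousAt_sign_of_ne_zero hx).comp hf).eventually_mem
    ((isOpen_discrete {sign (f x)}).mem_nhds rfl)

lemma eventually_sign_add_dotProduct_sub_eq (c : ℝ) (a x : ι → ℝ) :
    ∀ᶠ y in 𝓝 x, c ≠ 0 → sign (c + a ⬝ᵥ (y - x)) = sign c := by
  rcases eq_or_ne c 0 with rfl | hc
  · exact .of_forall fun _ h => absurd rfl h
  have := eventually_sign_eq (f := fun y => c + a ⬝ᵥ (y - x)) (x := x) (by fun_prop)
    (by simpa using hc)
  simp only [sub_self, dotProduct_zero, add_zero] at this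
  exact this.mono fun _ h _ => h

lemma IsFractSemilinear.isLocallyConicAt {X : Set (ι → ℝ)} (hX : IsFractSemilinear X)
    (x : ι → ℝ) : IsLocallyConicAt X x := by
  classical
  obtain ⟨H, hH⟩ := hX
  -- near `x`, the integer part of a point is one of these, fixed by which side of `x` it is on
  set K : Finset (ι → ℤ) := Fintype.piFinset fun i => {⌊x i⌋, ⌈x i⌉ - 1}
  set κ : (ι → ℝ) × ℝ → (ι → ℤ) → ℝ := fun p k => p.1 ⬝ᵥ (x - Int.cast ∘ k) - p.2
  have hfloor : ∀ᶠ y in 𝓝 x, ∀ i, ⌊y i⌋ = if x i ≤ y i then ⌊x i⌋ else ⌈x i⌉ - 1 :=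
    eventually_all.2 fun i => ((continuous_apply i).tendsto x).eventually (eventually_floor_eq _)
  have hsign : ∀ᶠ y in 𝓝 x, ∀ p ∈ H, ∀ k ∈ K, κ p k ≠ 0 →
      sign (κ p k + p.1 ⬝ᵥ (y - x)) = sign (κ p k) :=
    (eventually_all_finset H).2 fun p _ => (eventually_all_finset K).2 fun k _ =>
      eventually_sign_add_dotProduct_sub_eq _ _ _
  refine ⟨_, hfloor.and hsign, univ.image (Pi.single · 1) ∪ H.image Prod.fst, ?_⟩
  rintro y ⟨hy, hyH⟩ z ⟨hz, hzH⟩ hJ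
  have hside : ∀ i, (x i ≤ y i ↔ x i ≤ z i) := fun i => by
    have := hJ _ (mem_union_left _ (mem_image_of_mem _ (mem_univ i)))
    rw [single_one_dotProduct, single_one_dotProduct, Pi.sub_apply, Pi.sub_apply] at this
    rw [← sub_nonneg, ← sign_nonneg_iff, this, sign_nonneg_iff, sub_nonneg]
  have hfl : ∀ i, ⌊y i⌋ = ⌊z i⌋ := fun i => by rw [hy, hz, if_congr (hside i) rfl rfl]
  refine hH y z hfl fun p hp => ?_
  have hk : (⌊y ·⌋) ∈ K := Fintype.mem_piFinset.2 fun i => by rw [hy]; split_ifs <;> simp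
  have hfract : ∀ w : ι → ℝ, (∀ i, ⌊w i⌋ = ⌊y i⌋) →
      p.1 ⬝ᵥ (Int.fract ∘ w) - p.2 = κ p (⌊y ·⌋) + p.1 ⬝ᵥ (w - x) := by
    intro w hw
    have : Int.fract ∘ w = (x - Int.cast ∘ (⌊y ·⌋)) + (w - x) := by
      funext i
      simp [Int.fract, hw i]
    rw [this, dotProduct_add]
    ring
  rw [hfract y fun _ => rfl, hfract z fun i => (hfl i).symm]
  by_cases hκ : κ p (⌊y ·⌋) = 0
  · rw [hκ, zero_add, zero_add]
    exact hJ _ (mem_union_right _ (mem_image_of_mem _ hp))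
  · rw [hyH p hp _ hk hκ, hzH p hp _ hk hκ]

lemma isStratum_of_add_mem_iff {X : Set (ι → ℝ)} {x v : ι → ℝ} {ρ : ℝ} (J : Finset (ι → ℝ))
    (hdet : ∀ y ∈ ball x ρ, ∀ z ∈ ball x ρ,
      (∀ a ∈ J, sign (a ⬝ᵥ (y - x)) = sign (a ⬝ᵥ (z - x))) → (y ∈ X ↔ z ∈ X))
    (hρ : 0 < ρ) (hv : (2 * J.card + 1) * ‖v‖ < ρ / 4)
    (hinv : ∀ w ∈ ball x ρ, w + v ∈ ball x ρ → (w + v ∈ X ↔ w ∈ X)) : IsStratum X x v := by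
  refine ⟨ρ / 4, by positivity, ?_⟩
  rintro _ hy ⟨z, ⟨hzX, hz⟩, α, rfl⟩
  rw [mem_ball] at hy hz
  set T := |α| + 2 * J.card + 1
  have hαv : |α| * ‖v‖ < ρ / 2 := by
    rw [← Real.norm_eq_abs, ← norm_smul, ← dist_self_add_left _ z]
    linarith [dist_triangle_right (z + α • v) z x]
  have hline : ∀ t, |t| ≤ T → z + t • v ∈ ball x ρ := by
    intro t ht
    rw [mem_ball]
    calc dist (z + t • v) x ≤ ‖t • v‖ + dist z x := by
          rw [← dist_self_add_left _ z]; exact dist_triangle _ _ _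
      _ = |t| * ‖v‖ + dist z x := by rw [norm_smul, Real.norm_eq_abs]
      _ ≤ T * ‖v‖ + dist z x := by gcongr
      _ < ρ := by nlinarith [norm_nonneg v]
  have haff : ∀ (a : ι → ℝ) (t : ℝ), a ⬝ᵥ (z + t • v - x) = a ⬝ᵥ (z - x) + t * a ⬝ᵥ v := by
    intro a t
    rw [add_sub_right_comm, dotProduct_add, dotProduct_smul, smul_eq_mul]
  refine mem_of_periodic_of_sign_determined (S := {t | z + t • v ∈ X}) (T := T) J
    (fun a => a ⬝ᵥ (z - x)) (fun a => a ⬝ᵥ v) (fun t ht ht₁ => ?_)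
    (fun t t' ht ht' h => hdet _ (hline t ht) _ (hline t' ht') (by simpa only [haff] using h))
    le_rfl (by simpa using hzX)
  have := hinv _ (hline t ht) (by simpa [add_smul, add_assoc] using hline _ ht₁)
  simpa [add_smul, add_assoc] using this

lemma IsLocallyConicAt.exists_flip {X : Set (ι → ℝ)} {x : ι → ℝ} (hC : IsLocallyConicAt X x)
    (hX : IsSingular X x) {r : ℝ} (hr : 0 < r) :
    ∃ s > (0 : ℝ), ∀ v : ι → ℝ, v ≠ 0 → ‖v‖ < s →
      ∃ y ∈ ball x r, ∃ z ∈ ball x r, y = z + v ∧ (y ∈ X ↔ z ∉ X) := by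
  obtain ⟨U, hU, J, hdet⟩ := hC
  obtain ⟨ρ, hρ, hρU⟩ := Metric.mem_nhds_iff.1 hU
  have hρ' : 0 < min ρ r := lt_min hρ hr
  refine ⟨min ρ r / (4 * (2 * J.card + 1)), by positivity, fun v hv0 hvs => ?_⟩
  by_contra! hno
  refine hv0 (hX v (isStratum_of_add_mem_iff J (fun y hy z hz => hdet y
    (hρU (ball_subset_ball (min_le_left _ _) hy)) z (hρU (ball_subset_ball (min_le_left _ _) hz)))
    hρ' ?_ fun w hw hwv => ?_))
  · rw [lt_div_iff₀ (by positivity)] at hvs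
    linarith
  · have := hno _ (ball_subset_ball (min_le_right _ _) hwv) w
      (ball_subset_ball (min_le_right _ _) hw) rfl
    tauto

lemma isSingular_of_forall_exists_flip {X : Set (ι → ℝ)} {x : ι → ℝ}
    (h : ∀ r > (0 : ℝ), ∃ s > (0 : ℝ), ∀ v : ι → ℝ, v ≠ 0 → ‖v‖ < s →
      ∃ y ∈ ball x r, ∃ z ∈ ball x r, y = z + v ∧ (y ∈ X ↔ z ∉ X)) :
    IsSingular X x := by
  rintro v ⟨r, hr, hstr⟩
  by_contra hv0
  obtain ⟨s, hs, hflip⟩ := h r hr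
  obtain ⟨α, hα, hαs⟩ := exists_pos_mul_lt hs ‖v‖
  obtain ⟨_, hy, z, hz, rfl, hiff⟩ := hflip (α • v) (smul_ne_zero hα.ne' hv0)
    (by rwa [norm_smul, Real.norm_of_nonneg hα.le, mul_comm])
  have hfwd : z ∈ X → z + α • v ∈ X := fun hzX => hstr _ hy ⟨z, ⟨hzX, hz⟩, α, rfl⟩
  have hbwd : z + α • v ∈ X → z ∈ X := fun hyX => hstr _ hz ⟨_, ⟨hyX, hy⟩, -α, by module⟩
  tauto

end Conic

/-- Characterization of singularity for `⟨ℝ,+,<,ℤ⟩`-definable sets. -/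
theorem stmt12 (n : ℕ) (X : Set (Fin n → ℝ)) (hX : LsDefinable X) (x : Fin n → ℝ) :
    IsSingular X x ↔
      ∀ r > (0 : ℝ), ∃ s > (0 : ℝ), ∀ v : Fin n → ℝ, v ≠ 0 → ‖v‖ < s →
        ∃ y ∈ Metric.ball x r, ∃ z ∈ Metric.ball x r,
          y = z + v ∧ (y ∈ X ↔ z ∉ X) :=
  ⟨fun hsing _ hr => (hX.isFractSemilinear.isLocallyConicAt x).exists_flip hsing hr,
    isSingular_of_forall_exists_flip⟩
end
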